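/- arXiv:2408.01219 — 5 statements merged into one kernel-verified Lean document; each statement's English description precedes it below -/
import Mathlib

section
/- Let H be a p-adic reductive group, K ⊆ H an open compact subgroup with an Iwahori decomposition K = N̄_K · M_K · N_K with respect to a minimal parabolic P with maximally split torus A, such that for all a ∈ A⁻ one has a⁻¹ N_K a ⊆ N_K and a N̄_K a⁻¹ ⊆ N̄_K, and M_K centralized appropriately. Then for all a, b ∈ A⁻, (K a K)·(K b K) = K ab K, and consequently H⁻ := ∪_{a∈A⁻} K a K is an open submonoid of H. -/
open Pointwise

/-- Let `K` be an open compact subgroup of a td-group with an Iwahori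
decomposition `K = N̄_K · M_K · N_K` with respect to a minimal parabolic, and let `A⁻` be
the anti-dominant submonoid of the maximally split torus, so that for all `a ∈ A⁻`:
`a⁻¹ N_K a ⊆ N_K`, `a N̄_K a⁻¹ ⊆ N̄_K`, and `M_K` commutes with `A`.  Then for all
`a, b ∈ A⁻` one has `(KaK)·(KbK) = K(ab)K`, and consequently
`H⁻ = ∪_{a∈A⁻} KaK` is an open submonoid. -/
theorem stmt_2 {G : Type*} [Group G] [TopologicalSpace G] [IsTopologicalGroup G]
    (K NbarK MK NK : Subgroup G)
    (hKopen : IsOpen (K : Set G)) (hKcpt : IsCompact (K : Set G))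
    (hNbar_le : NbarK ≤ K) (hM_le : MK ≤ K) (hN_le : NK ≤ K)
    (hfact : (K : Set G) = (NbarK : Set G) * (MK : Set G) * (NK : Set G))
    (Aneg : Set G) (h1A : (1 : G) ∈ Aneg)
    (hmulA : ∀ a ∈ Aneg, ∀ b ∈ Aneg, a * b ∈ Aneg)
    (hN : ∀ a ∈ Aneg, ∀ x ∈ NK, a⁻¹ * x * a ∈ NK)
    (hNbar : ∀ a ∈ Aneg, ∀ x ∈ NbarK, a * x * a⁻¹ ∈ NbarK)
    (hM : ∀ a ∈ Aneg, ∀ m ∈ MK, a * m = m * a) :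
    (∀ a ∈ Aneg, ∀ b ∈ Aneg,
        ((K : Set G) * {a} * (K : Set G)) * ((K : Set G) * {b} * (K : Set G))
          = (K : Set G) * {a * b} * (K : Set G)) ∧
    IsOpen (⋃ a ∈ Aneg, (K : Set G) * {a} * (K : Set G)) ∧
    (1 : G) ∈ (⋃ a ∈ Aneg, (K : Set G) * {a} * (K : Set G)) ∧
    (∀ x ∈ (⋃ a ∈ Aneg, (K : Set G) * {a} * (K : Set G)),
      ∀ y ∈ (⋃ a ∈ Aneg, (K : Set G) * {a} * (K : Set G)),
        x * y ∈ (⋃ a ∈ Aneg, (K : Set G) * {a} * (K : Set G))) := by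
  -- Key lemma: a K b ⊆ K (ab) K
  have hsub : ∀ a ∈ Aneg, ∀ b ∈ Aneg, ∀ k ∈ (K : Set G),
      a * k * b ∈ (K : Set G) * {a * b} * (K : Set G) := by
    intro a ha b hb k hk
    rw [hfact] at hk
    obtain ⟨nm, hnm, n, hn, rfl⟩ := hk
    obtain ⟨nb, hnb, m, hm, rfl⟩ := hnm
    have hx : (a * nb * a⁻¹) * m ∈ (K : Set G) :=
      mul_mem (hNbar_le (hNbar a ha nb hnb)) (hM_le hm)
    have hy : b⁻¹ * n * b ∈ (K : Set G) := hN_le (hN b hb n hn)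
    have heq : ((a * nb * a⁻¹) * m) * (a * b) * (b⁻¹ * n * b) = a * (nb * m * n) * b := by
      have hma : a⁻¹ * m * a = m := by
        have h := hM a ha m hm
        calc a⁻¹ * m * a = a⁻¹ * (m * a) := by group
          _ = a⁻¹ * (a * m) := by rw [h]
          _ = m := by group
      calc ((a * nb * a⁻¹) * m) * (a * b) * (b⁻¹ * n * b)
          = a * nb * (a⁻¹ * m * a) * n * b := by group
        _ = a * nb * m * n * b := by rw [hma]
        _ = a * (nb * m * n) * b := by group
    rw [← heq]
    exact Set.mul_mem_mul (Set.mul_mem_mul hx rfl) hy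
  have hmain : ∀ a ∈ Aneg, ∀ b ∈ Aneg,
      ((K : Set G) * {a} * (K : Set G)) * ((K : Set G) * {b} * (K : Set G))
        = (K : Set G) * {a * b} * (K : Set G) := by
    intro a ha b hb
    apply Set.Subset.antisymm
    · rintro x ⟨u, hu, v, hv, rfl⟩
      obtain ⟨u1, hu1, k2, hk2, rfl⟩ := hu
      obtain ⟨k1, hk1, a', ha', rfl⟩ := hu1
      obtain ⟨v1, hv1, k4, hk4, rfl⟩ := hv
      obtain ⟨k3, hk3, b', hb', rfl⟩ := hv1
      rcases ha' with rfl
      rcases hb' with rfl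
      have : a' * (k2 * k3) * b' ∈ (K : Set G) * {a' * b'} * (K : Set G) :=
        hsub a' ha b' hb (k2 * k3) (mul_mem hk2 hk3)
      obtain ⟨c1, hc1, d, hd, he⟩ := this
      obtain ⟨c, hc, ab, hab, rfl⟩ := hc1
      rcases hab with rfl
      show k1 * a' * k2 * (k3 * b' * k4) ∈ _
      have : k1 * a' * k2 * (k3 * b' * k4) = (k1 * c) * (a' * b') * (d * k4) := by
        have : a' * (k2 * k3) * b' = c * (a' * b') * d := he.symm
        calc k1 * a' * k2 * (k3 * b' * k4)
            = k1 * (a' * (k2 * k3) * b') * k4 := by group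
          _ = k1 * (c * (a' * b') * d) * k4 := by rw [this]
          _ = (k1 * c) * (a' * b') * (d * k4) := by group
      rw [this]
      exact Set.mul_mem_mul (Set.mul_mem_mul (mul_mem hk1 hc) rfl) (mul_mem hd hk4)
    · rintro x ⟨x1, hx1, k2, hk2, rfl⟩
      obtain ⟨k1, hk1, ab, hab, rfl⟩ := hx1
      rcases hab with rfl
      show k1 * (a * b) * k2 ∈ _
      have : k1 * (a * b) * k2 = (k1 * a * 1) * (1 * b * k2) := by group
      rw [this]
      exact Set.mul_mem_mul
        (Set.mul_mem_mul (Set.mul_mem_mul hk1 rfl) (one_mem K))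
        (Set.mul_mem_mul (Set.mul_mem_mul (one_mem K) rfl) hk2)
  refine ⟨hmain, ?_, ?_, ?_⟩
  · exact isOpen_biUnion fun a _ => hKopen.mul_left
  · refine Set.mem_biUnion h1A ?_
    have h1m : (1 : G) * 1 * 1 ∈ (K : Set G) * {(1 : G)} * (K : Set G) :=
      Set.mul_mem_mul (Set.mul_mem_mul (one_mem K) rfl) (one_mem K)
    simpa using h1m
  · intro x hx y hy
    obtain ⟨_, ⟨a, rfl⟩, _, ⟨ha, rfl⟩, hxa⟩ := hx
    obtain ⟨_, ⟨b, rfl⟩, _, ⟨hb, rfl⟩, hyb⟩ := hy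
    refine Set.mem_biUnion (hmulA a ha b hb) ?_
    rw [← hmain a ha b hb]
    exact Set.mul_mem_mul hxa hyb
end

section
/- Let F be a non-archimedean local field with ring of integers 𝒪 and uniformizer ϖ. Let n ≥ 1, and let φ = diag(ϖ⁻¹,…,ϖ⁻ⁿ). Then the quotient 𝒩_n := φ⁻¹N_n(𝒪)φ / N_n(𝒪) has cardinality ℓ^{n(n+1)(n-1)/6}, where ℓ is the size of the residue field and N_n is the group of upper triangular unipotent matrices. -/
open Finset
section
variable {F : Type*} [Field F]

open Classical in
noncomputable def s5rep (O : Subring F) (ϖ : F) (T : ℕ → Finset F) (k : ℕ) (y : F) : F :=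
  if h : ∃ r, r ∈ T k ∧ ∃ d ∈ O, y - r = ϖ ^ k * d then h.choose else 0

lemma s5rep_spec (O : Subring F) (ϖ : F) (T : ℕ → Finset F) (k : ℕ) (y : F)
    (h : ∃! r, r ∈ T k ∧ ∃ d ∈ O, y - r = ϖ ^ k * d) :
    (s5rep O ϖ T k y ∈ T k ∧ ∃ d ∈ O, y - s5rep O ϖ T k y = ϖ ^ k * d) ∧
    ∀ r', (r' ∈ T k ∧ ∃ d ∈ O, y - r' = ϖ ^ k * d) → r' = s5rep O ϖ T k y := by
  have hex : ∃ r, r ∈ T k ∧ ∃ d ∈ O, y - r = ϖ ^ k * d := h.exists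
  constructor
  · rw [s5rep, dif_pos hex]
    exact hex.choose_spec
  · intro r' hr'
    rw [s5rep, dif_pos hex]
    obtain ⟨r, hr, hu⟩ := h
    rw [hu r' hr', hu _ hex.choose_spec]

noncomputable def s5A (O : Subring F) (ϖ : F) (T : ℕ → Finset F) {n : ℕ}
    (η : Matrix (Fin n) (Fin n) F) (d : ℕ) (i j : Fin n) : F × F :=
  if hd : (j : ℕ) - (i : ℕ) = d ∧ i < j then
    let y : F := η i j - ∑ k ∈ (Finset.Ioo i j).attach,
      (s5A O ϖ T η ((k.1 : ℕ) - (i : ℕ)) i k.1).1 *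
      (s5A O ϖ T η ((j : ℕ) - (k.1 : ℕ)) k.1 j).2
    (s5rep O ϖ T d (ϖ ^ d * y) / ϖ ^ d, y - s5rep O ϖ T d (ϖ ^ d * y) / ϖ ^ d)
  else (0, 0)
termination_by d
decreasing_by
  · obtain ⟨hk1, hk2⟩ := Finset.mem_Ioo.mp k.2
    simp only [Fin.lt_def] at *
    omega
  · obtain ⟨hk1, hk2⟩ := Finset.mem_Ioo.mp k.2
    simp only [Fin.lt_def] at *
    omega

noncomputable def s5Y (O : Subring F) (ϖ : F) (T : ℕ → Finset F) {n : ℕ}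
    (η : Matrix (Fin n) (Fin n) F) (i j : Fin n) : F :=
  η i j - ∑ k ∈ (Finset.Ioo i j).attach,
      (s5A O ϖ T η ((k.1 : ℕ) - (i : ℕ)) i k.1).1 *
      (s5A O ϖ T η ((j : ℕ) - (k.1 : ℕ)) k.1 j).2

lemma s5A_eq (O : Subring F) (ϖ : F) (T : ℕ → Finset F) {n : ℕ}
    (η : Matrix (Fin n) (Fin n) F) (d : ℕ) (i j : Fin n)
    (hd : (j : ℕ) - (i : ℕ) = d) (hij : i < j) :
    s5A O ϖ T η d i j =
      (s5rep O ϖ T d (ϖ ^ d * s5Y O ϖ T η i j) / ϖ ^ d,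
       s5Y O ϖ T η i j - s5rep O ϖ T d (ϖ ^ d * s5Y O ϖ T η i j) / ϖ ^ d) := by
  rw [s5A, dif_pos ⟨hd, hij⟩]
  rfl

lemma s5_sum_univ {M : Type*} [AddCommMonoid M] {n : ℕ} (i j : Fin n) (hij : i < j)
    (f : Fin n → M) (h1 : ∀ k, k < i → f k = 0) (h2 : ∀ k, j < k → f k = 0) :
    ∑ k, f k = f i + f j + ∑ k ∈ Finset.Ioo i j, f k := by
  have hs : ∑ k, f k = ∑ k ∈ Finset.Icc i j, f k := by
    refine (Finset.sum_subset (Finset.subset_univ _) ?_).symm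
    intro k _ hk
    rw [Finset.mem_Icc, not_and_or] at hk
    rcases hk with hk | hk
    · exact h1 k (lt_of_not_ge hk)
    · exact h2 k (lt_of_not_ge hk)
  rw [hs, ← Finset.Ico_insert_right hij.le, Finset.sum_insert (by simp),
    ← Finset.Ioo_insert_left hij, Finset.sum_insert (by simp)]
  abel

lemma s5A_inv (O : Subring F) (ϖ : F) (hϖO : ϖ ∈ O) (hϖ0 : ϖ ≠ 0) (T : ℕ → Finset F)
    (hTO : ∀ k, (↑(T k) : Set F) ⊆ (O : Set F))
    (hT : ∀ k, ∀ y ∈ O, ∃! r, r ∈ T k ∧ ∃ d ∈ O, y - r = ϖ ^ k * d)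
    {n : ℕ} (η : Matrix (Fin n) (Fin n) F)
    (hη : ∀ i j : Fin n, i < j → ϖ ^ ((j : ℕ) - (i : ℕ)) * η i j ∈ O) :
    ∀ d : ℕ, ∀ i j : Fin n, (j : ℕ) - (i : ℕ) = d → i < j →
      ϖ ^ d * (s5A O ϖ T η d i j).1 ∈ T d ∧
      (s5A O ϖ T η d i j).2 ∈ O ∧
      (s5A O ϖ T η d i j).1 + (s5A O ϖ T η d i j).2 = s5Y O ϖ T η i j := by
  intro d
  induction d using Nat.strong_induction_on with
  | _ d IH =>
    intro i j hd hij
    have hϖd : (ϖ : F) ^ d ≠ 0 := pow_ne_zero _ hϖ0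
    have hmem : ϖ ^ d * s5Y O ϖ T η i j ∈ O := by
      rw [s5Y, mul_sub, Finset.mul_sum]
      refine sub_mem (by rw [← hd]; exact hη i j hij) (Subring.sum_mem _ ?_)
      intro k _
      obtain ⟨hk1, hk2⟩ := Finset.mem_Ioo.mp k.2
      have hk1' : (i : ℕ) < (k.1 : ℕ) := hk1
      have hk2' : (k.1 : ℕ) < (j : ℕ) := hk2
      have hsplit : d = ((k.1 : ℕ) - (i : ℕ)) + ((j : ℕ) - (k.1 : ℕ)) := by omega
      have h1 := (IH _ (by omega) i k.1 rfl hk1).1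
      have h2 := (IH _ (by omega) k.1 j rfl hk2).2.1
      have : ϖ ^ d * ((s5A O ϖ T η ((k.1 : ℕ) - (i : ℕ)) i k.1).1 *
          (s5A O ϖ T η ((j : ℕ) - (k.1 : ℕ)) k.1 j).2) =
          (ϖ ^ ((k.1 : ℕ) - (i : ℕ)) * (s5A O ϖ T η ((k.1 : ℕ) - (i : ℕ)) i k.1).1) *
          (ϖ ^ ((j : ℕ) - (k.1 : ℕ)) *
          (s5A O ϖ T η ((j : ℕ) - (k.1 : ℕ)) k.1 j).2) := by
        rw [hsplit, pow_add]; ring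
      rw [this]
      exact mul_mem (hTO _ h1) (mul_mem (pow_mem hϖO _) h2)
    have hspec := s5rep_spec O ϖ T d (ϖ ^ d * s5Y O ϖ T η i j) (hT d _ hmem)
    rw [s5A_eq O ϖ T η d i j hd hij]
    obtain ⟨⟨hr1, dd, hdd, hdeq⟩, _⟩ := hspec
    refine ⟨?_, ?_, by ring⟩
    · rw [mul_div_assoc', mul_comm, mul_div_assoc, div_self hϖd, mul_one]
      exact hr1
    · have : s5Y O ϖ T η i j - s5rep O ϖ T d (ϖ ^ d * s5Y O ϖ T η i j) / ϖ ^ d = dd := by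
        field_simp
        rw [mul_comm (s5Y O ϖ T η i j) (ϖ ^ d)]
        linear_combination hdeq
      rw [this]; exact hdd

noncomputable def s5r (O : Subring F) (ϖ : F) (T : ℕ → Finset F) {n : ℕ}
    (η : Matrix (Fin n) (Fin n) F) : Matrix (Fin n) (Fin n) F :=
  fun i j => if i = j then 1 else
    if i < j then (s5A O ϖ T η ((j : ℕ) - (i : ℕ)) i j).1 else 0

noncomputable def s5n (O : Subring F) (ϖ : F) (T : ℕ → Finset F) {n : ℕ}
    (η : Matrix (Fin n) (Fin n) F) : Matrix (Fin n) (Fin n) F :=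
  fun i j => if i = j then 1 else
    if i < j then (s5A O ϖ T η ((j : ℕ) - (i : ℕ)) i j).2 else 0

variable (O : Subring F) (ϖ : F) (T : ℕ → Finset F) {n : ℕ} (η : Matrix (Fin n) (Fin n) F)

lemma s5r_diag (i : Fin n) : s5r O ϖ T η i i = 1 := if_pos rfl

lemma s5r_lower (i j : Fin n) (h : j < i) : s5r O ϖ T η i j = 0 := by
  rw [s5r, if_neg (ne_of_gt h), if_neg (not_lt_of_gt h)]

lemma s5r_upper (i j : Fin n) (h : i < j) :
    s5r O ϖ T η i j = (s5A O ϖ T η ((j : ℕ) - (i : ℕ)) i j).1 := by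
  rw [s5r, if_neg (ne_of_lt h), if_pos h]

lemma s5n_diag (i : Fin n) : s5n O ϖ T η i i = 1 := if_pos rfl

lemma s5n_lower (i j : Fin n) (h : j < i) : s5n O ϖ T η i j = 0 := by
  rw [s5n, if_neg (ne_of_gt h), if_neg (not_lt_of_gt h)]

lemma s5n_upper (i j : Fin n) (h : i < j) :
    s5n O ϖ T η i j = (s5A O ϖ T η ((j : ℕ) - (i : ℕ)) i j).2 := by
  rw [s5n, if_neg (ne_of_lt h), if_pos h]

lemma s5_factor (O : Subring F) (ϖ : F) (hϖO : ϖ ∈ O) (hϖ0 : ϖ ≠ 0) (T : ℕ → Finset F)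
    (hTO : ∀ k, (↑(T k) : Set F) ⊆ (O : Set F))
    (hT : ∀ k, ∀ y ∈ O, ∃! r, r ∈ T k ∧ ∃ d ∈ O, y - r = ϖ ^ k * d)
    {n : ℕ} (η : Matrix (Fin n) (Fin n) F)
    (hηd : ∀ i, η i i = 1) (hηl : ∀ i j, j < i → η i j = 0)
    (hη : ∀ i j : Fin n, i < j → ϖ ^ ((j : ℕ) - (i : ℕ)) * η i j ∈ O) :
    η = s5r O ϖ T η * s5n O ϖ T η := by
  ext i j
  rw [Matrix.mul_apply]
  rcases lt_trichotomy i j with hij | hij | hij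
  · have hne : i ≠ j := ne_of_lt hij
    have hsum := s5_sum_univ i j hij (fun k => s5r O ϖ T η i k * s5n O ϖ T η k j)
      (fun k hk => by
        simp only [s5r, if_neg (ne_of_gt hk), if_neg (not_lt_of_gt hk), zero_mul])
      (fun k hk => by
        simp only [s5n, if_neg (ne_of_gt hk), if_neg (not_lt_of_gt hk), mul_zero])
    rw [hsum]
    have hIoo : ∀ k ∈ Finset.Ioo i j,
        s5r O ϖ T η i k * s5n O ϖ T η k j =
        (s5A O ϖ T η ((k : ℕ) - (i : ℕ)) i k).1 *
        (s5A O ϖ T η ((j : ℕ) - (k : ℕ)) k j).2 := by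
      intro k hk
      obtain ⟨hk1, hk2⟩ := Finset.mem_Ioo.mp hk
      rw [s5r_upper O ϖ T η i k hk1, s5n_upper O ϖ T η k j hk2]
    rw [Finset.sum_congr rfl hIoo]
    rw [s5r_diag, s5n_diag, s5r_upper O ϖ T η i j hij, s5n_upper O ϖ T η i j hij,
      one_mul, mul_one]
    have hc := (s5A_inv O ϖ hϖO hϖ0 T hTO hT η hη ((j : ℕ) - (i : ℕ)) i j rfl hij).2.2
    rw [add_comm ((s5A O ϖ T η (↑j - ↑i) i j).2), hc, s5Y, ← Finset.sum_attach
      (Finset.Ioo i j) (fun k => (s5A O ϖ T η ((k : ℕ) - (i : ℕ)) i k).1 *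
        (s5A O ϖ T η ((j : ℕ) - (k : ℕ)) k j).2)]
    ring
  · subst hij
    rw [Finset.sum_eq_single i (fun k _ hk => ?_) (by simp), s5r_diag, s5n_diag,
      one_mul, hηd]
    rcases lt_or_gt_of_ne hk with h | h
    · rw [s5r_lower O ϖ T η i k h, zero_mul]
    · rw [s5n_lower O ϖ T η k i h, mul_zero]
  · rw [hηl i j hij, Finset.sum_eq_zero]
    intro k _
    rcases lt_or_ge k i with h | h
    · rw [s5r_lower O ϖ T η i k h, zero_mul]
    · rw [s5n_lower O ϖ T η k j (lt_of_lt_of_le hij h), mul_zero]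

lemma s5_unique (hϖO : ϖ ∈ O) (hϖ0 : ϖ ≠ 0)
    (hTO : ∀ k, (↑(T k) : Set F) ⊆ (O : Set F))
    (hT : ∀ k, ∀ y ∈ O, ∃! r, r ∈ T k ∧ ∃ d ∈ O, y - r = ϖ ^ k * d)
    (ρ' ν' : Matrix (Fin n) (Fin n) F)
    (hρd : ∀ i, ρ' i i = 1) (hρl : ∀ i j : Fin n, j < i → ρ' i j = 0)
    (hρT : ∀ i j : Fin n, i < j → ϖ ^ ((j : ℕ) - (i : ℕ)) * ρ' i j ∈ T ((j : ℕ) - (i : ℕ)))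
    (hνd : ∀ i, ν' i i = 1) (hνl : ∀ i j : Fin n, j < i → ν' i j = 0)
    (hνO : ∀ i j : Fin n, i < j → ν' i j ∈ O)
    (hfac : η = ρ' * ν') :
    ∀ d : ℕ, ∀ i j : Fin n, (j : ℕ) - (i : ℕ) = d → i < j →
      ρ' i j = (s5A O ϖ T η d i j).1 ∧ ν' i j = (s5A O ϖ T η d i j).2 := by
  intro d
  induction d using Nat.strong_induction_on with
  | _ d IH =>
    intro i j hd hij
    have hϖd : (ϖ : F) ^ d ≠ 0 := pow_ne_zero _ hϖ0
    -- the entry equation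
    have hentry : η i j = ρ' i j + ν' i j +
        ∑ k ∈ Finset.Ioo i j, ρ' i k * ν' k j := by
      have hsum := s5_sum_univ i j hij (fun k => ρ' i k * ν' k j)
        (fun k hk => by show ρ' i k * ν' k j = 0; rw [hρl i k hk, zero_mul])
        (fun k hk => by show ρ' i k * ν' k j = 0; rw [hνl k j hk, mul_zero])
      have : η i j = ∑ k, ρ' i k * ν' k j := by rw [hfac, Matrix.mul_apply]
      rw [this, hsum]
      rw [hρd, hνd, one_mul, mul_one]
      ring
    have hIoo : ∀ k ∈ Finset.Ioo i j, ρ' i k * ν' k j =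
        (s5A O ϖ T η ((k : ℕ) - (i : ℕ)) i k).1 *
        (s5A O ϖ T η ((j : ℕ) - (k : ℕ)) k j).2 := by
      intro k hk
      obtain ⟨hk1, hk2⟩ := Finset.mem_Ioo.mp hk
      have hk1' : (i : ℕ) < (k : ℕ) := hk1
      have hk2' : (k : ℕ) < (j : ℕ) := hk2
      have hd' : (j : ℕ) - (i : ℕ) = d := hd
      rw [(IH _ (by omega) i k rfl hk1).1, (IH _ (by omega) k j rfl hk2).2]
    have hy : ρ' i j + ν' i j = s5Y O ϖ T η i j := by
      rw [s5Y, Finset.sum_attach (Finset.Ioo i j)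
        (fun k => (s5A O ϖ T η ((k : ℕ) - (i : ℕ)) i k).1 *
          (s5A O ϖ T η ((j : ℕ) - (k : ℕ)) k j).2),
        ← Finset.sum_congr rfl hIoo, hentry]
      ring
    have hmem : ϖ ^ d * s5Y O ϖ T η i j ∈ O := by
      rw [← hy, mul_add]
      refine add_mem ?_ (mul_mem (pow_mem hϖO _) (hνO i j hij))
      rw [← hd]
      exact hTO _ (hρT i j hij)
    have hspec := s5rep_spec O ϖ T d (ϖ ^ d * s5Y O ϖ T η i j) (hT d _ hmem)
    have huniq := hspec.2 (ϖ ^ d * ρ' i j) ⟨by rw [← hd]; exact hρT i j hij,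
      ν' i j, hνO i j hij, by rw [← hy]; ring⟩
    have hρeq : ρ' i j = s5rep O ϖ T d (ϖ ^ d * s5Y O ϖ T η i j) / ϖ ^ d := by
      rw [← huniq, mul_comm, mul_div_assoc, div_self hϖd, mul_one]
    rw [s5A_eq O ϖ T η d i j hd hij]
    refine ⟨hρeq, ?_⟩
    rw [← hρeq, ← hy]
    ring

open Classical in
noncomputable def s5toMat (ϖ : F) (n : ℕ) (c : Fin n × Fin n → F) :
    Matrix (Fin n) (Fin n) F :=
  fun i j => if i = j then 1 else
    if i < j then c (i, j) / ϖ ^ ((j : ℕ) - (i : ℕ)) else 0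

open Classical in
noncomputable def s5B (O : Subring F) (T : ℕ → Finset F) (n : ℕ)
    (p : Fin n × Fin n) : Finset F :=
  if p.1 < p.2 then T ((p.2 : ℕ) - (p.1 : ℕ)) else {0}

open Classical in
noncomputable def s5S (O : Subring F) (ϖ : F) (T : ℕ → Finset F) (n : ℕ) :
    Finset (Matrix (Fin n) (Fin n) F) :=
  (Fintype.piFinset (s5B O T n)).image (s5toMat ϖ n)

lemma s5toMat_diag (ϖ : F) (n : ℕ) (c : Fin n × Fin n → F) (i : Fin n) :
    s5toMat ϖ n c i i = 1 := if_pos rfl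

lemma s5toMat_lower (ϖ : F) (n : ℕ) (c : Fin n × Fin n → F) (i j : Fin n) (h : j < i) :
    s5toMat ϖ n c i j = 0 := by
  rw [s5toMat, if_neg (ne_of_gt h), if_neg (not_lt_of_gt h)]

lemma s5toMat_upper (ϖ : F) (n : ℕ) (c : Fin n × Fin n → F) (i j : Fin n) (h : i < j) :
    s5toMat ϖ n c i j = c (i, j) / ϖ ^ ((j : ℕ) - (i : ℕ)) := by
  rw [s5toMat, if_neg (ne_of_lt h), if_pos h]

lemma s5S_props (O : Subring F) (ϖ : F) (hϖ0 : ϖ ≠ 0) (T : ℕ → Finset F) (n : ℕ)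
    (M : Matrix (Fin n) (Fin n) F) (hM : M ∈ s5S O ϖ T n) :
    (∀ i, M i i = 1) ∧ (∀ i j : Fin n, j < i → M i j = 0) ∧
    (∀ i j : Fin n, i < j →
      ϖ ^ ((j : ℕ) - (i : ℕ)) * M i j ∈ T ((j : ℕ) - (i : ℕ))) := by
  classical
  obtain ⟨c, hc, rfl⟩ := Finset.mem_image.mp hM
  refine ⟨s5toMat_diag ϖ n c, fun i j h => s5toMat_lower ϖ n c i j h, fun i j h => ?_⟩
  rw [s5toMat_upper ϖ n c i j h]
  have hϖd : (ϖ : F) ^ ((j : ℕ) - (i : ℕ)) ≠ 0 := pow_ne_zero _ hϖ0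
  rw [mul_div_assoc', mul_comm, mul_div_assoc, div_self hϖd, mul_one]
  have := Fintype.mem_piFinset.mp hc (i, j)
  rwa [s5B, if_pos h] at this

-- Gauss-type sums
lemma s5_gauss (n : ℕ) : 2 * ∑ i ∈ Finset.range n, (n - i) = n * (n + 1) := by
  induction n with
  | zero => simp
  | succ n ih =>
    rw [Finset.sum_range_succ]
    have h1 : ∑ i ∈ Finset.range n, (n + 1 - i) = ∑ i ∈ Finset.range n, ((n - i) + 1) :=
      Finset.sum_congr rfl (fun i hi => by have := Finset.mem_range.mp hi; omega)
    rw [h1, Finset.sum_add_distrib, Finset.sum_const, Finset.card_range, smul_eq_mul]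
    have h2 : (n + 1) * (n + 1 + 1) = n * (n + 1) + 2 * (n + 1) := by ring
    omega

lemma s5_gsum (n : ℕ) :
    6 * ∑ i ∈ Finset.range n, ∑ j ∈ Finset.range n, (if i < j then j - i else 0)
      = n * (n + 1) * (n - 1) := by
  induction n with
  | zero => simp
  | succ n ih =>
    have hin : ∀ i, ∑ j ∈ Finset.range (n + 1), (if i < j then j - i else 0)
        = (∑ j ∈ Finset.range n, (if i < j then j - i else 0))
          + (if i < n then n - i else 0) := fun i => Finset.sum_range_succ _ n
    rw [Finset.sum_congr rfl (fun i _ => hin i), Finset.sum_add_distrib,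
      Finset.sum_range_succ _ n, Finset.sum_range_succ (fun i => if i < n then n - i else 0) n,
      if_neg (lt_irrefl n)]
    have h0 : ∑ j ∈ Finset.range n, (if n < j then j - n else 0) = 0 :=
      Finset.sum_eq_zero (fun j hj => by
        have := Finset.mem_range.mp hj; rw [if_neg (by omega)])
    have h1 : ∑ i ∈ Finset.range n, (if i < n then n - i else 0)
        = ∑ i ∈ Finset.range n, (n - i) :=
      Finset.sum_congr rfl (fun i hi => if_pos (Finset.mem_range.mp hi))
    rw [h0, h1]
    have := s5_gauss n
    have h2 : (n + 1) * (n + 1 + 1) * (n + 1 - 1)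
        = n * (n + 1) * (n - 1) + 3 * (n * (n + 1)) := by
      cases n with
      | zero => rfl
      | succ m =>
        simp only [Nat.succ_sub_one]
        ring
    omega

lemma s5_finsum (n : ℕ) :
    ∑ p : Fin n × Fin n, (if p.1 < p.2 then (p.2 : ℕ) - (p.1 : ℕ) else 0)
      = n * (n + 1) * (n - 1) / 6 := by
  have h1 : ∑ p : Fin n × Fin n, (if p.1 < p.2 then (p.2 : ℕ) - (p.1 : ℕ) else 0)
      = ∑ i : Fin n, ∑ j : Fin n, (if (i : ℕ) < (j : ℕ) then (j : ℕ) - (i : ℕ) else 0) := by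
    rw [Fintype.sum_prod_type]
    exact Finset.sum_congr rfl (fun i _ => Finset.sum_congr rfl (fun j _ => by
      simp only [Fin.lt_def]))
  have h2 : ∀ i : Fin n, ∑ j : Fin n, (if (i : ℕ) < (j : ℕ) then (j : ℕ) - (i : ℕ) else 0)
      = ∑ j ∈ Finset.range n, (if (i : ℕ) < j then j - (i : ℕ) else 0) := fun i =>
    Fin.sum_univ_eq_sum_range (fun j => if (i : ℕ) < j then j - (i : ℕ) else 0) n
  have h3 : ∑ i : Fin n, ∑ j ∈ Finset.range n, (if (i : ℕ) < j then j - (i : ℕ) else 0)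
      = ∑ i ∈ Finset.range n, ∑ j ∈ Finset.range n, (if i < j then j - i else 0) :=
    Fin.sum_univ_eq_sum_range
      (fun i => ∑ j ∈ Finset.range n, (if i < j then j - i else 0)) n
  rw [h1, Finset.sum_congr rfl (fun i _ => h2 i), h3]
  have := s5_gsum n
  omega

lemma s5S_card (O : Subring F) (ϖ : F) (hϖ0 : ϖ ≠ 0) (T : ℕ → Finset F) (ℓ : ℕ)
    (hTcard : ∀ k, (T k).card = ℓ ^ k) (n : ℕ) :
    (s5S O ϖ T n).card = ℓ ^ (n * (n + 1) * (n - 1) / 6) := by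
  classical
  rw [s5S, Finset.card_image_of_injOn, Fintype.card_piFinset]
  · have h1 : ∀ p : Fin n × Fin n, (s5B O T n p).card
        = ℓ ^ (if p.1 < p.2 then (p.2 : ℕ) - (p.1 : ℕ) else 0) := by
      intro p
      rw [s5B]
      split
      · rw [hTcard]
      · rw [Finset.card_singleton, pow_zero]
    rw [Finset.prod_congr rfl (fun p _ => h1 p), Finset.prod_pow_eq_pow_sum, s5_finsum]
  · intro c1 hc1 c2 hc2 heq
    funext p
    obtain ⟨i, j⟩ := p
    by_cases hij : i < j
    · have := congrFun (congrFun heq i) j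
      rw [s5toMat_upper ϖ n c1 i j hij, s5toMat_upper ϖ n c2 i j hij] at this
      have hϖd : (ϖ : F) ^ ((j : ℕ) - (i : ℕ)) ≠ 0 := pow_ne_zero _ hϖ0
      field_simp at this
      exact this
    · have m1 := Fintype.mem_piFinset.mp hc1 (i, j)
      have m2 := Fintype.mem_piFinset.mp hc2 (i, j)
      rw [s5B, if_neg hij, Finset.mem_singleton] at m1 m2
      rw [m1, m2]

end

/-- Let `F` be a non-archimedean local field with integers `O`, uniformizer `ϖ`,
and residue field of size `ℓ` (encoded by the hypothesis that `O/ϖ^k O` has a set of `ℓ^k`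
representatives for each `k`).  With `φ = diag(ϖ⁻¹,…,ϖ⁻ⁿ)`, the quotient
`𝒩_n = φ⁻¹N_n(O)φ / N_n(O)` has cardinality `ℓ^{n(n+1)(n-1)/6}`: there is a set `S` of coset
representatives of that cardinality, i.e. every `η ∈ φ⁻¹N_n(O)φ` factors uniquely as
`η = ρ·ν` with `ρ ∈ S` and `ν ∈ N_n(O)`.  (Membership `η ∈ φ⁻¹N_n(O)φ` is the condition
that `η` is upper-triangular unipotent with `ϖ^{j-i}·η_{ij} ∈ O` for `i < j`.) -/
theorem stmt_5 {F : Type*} [Field F] (O : Subring F) (ϖ : F) (ℓ : ℕ)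
    (hϖO : ϖ ∈ O) (hϖ0 : ϖ ≠ 0)
    (hval : ∀ x : F, x ∈ O ∨ x⁻¹ ∈ O)
    (hres : ∀ k : ℕ, ∃ T : Finset F, (↑T : Set F) ⊆ (O : Set F) ∧ T.card = ℓ ^ k ∧
      ∀ y ∈ O, ∃! r, r ∈ T ∧ ∃ d ∈ O, y - r = ϖ ^ k * d)
    (n : ℕ) :
    ∃ S : Finset (Matrix (Fin n) (Fin n) F),
      S.card = ℓ ^ (n * (n + 1) * (n - 1) / 6) ∧
      (∀ η ∈ S, (∀ i, η i i = 1) ∧ (∀ i j, j < i → η i j = 0) ∧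
        (∀ i j : Fin n, i < j → ϖ ^ ((j : ℕ) - (i : ℕ)) * η i j ∈ O)) ∧
      (∀ η : Matrix (Fin n) (Fin n) F,
        ((∀ i, η i i = 1) ∧ (∀ i j, j < i → η i j = 0) ∧
          (∀ i j : Fin n, i < j → ϖ ^ ((j : ℕ) - (i : ℕ)) * η i j ∈ O)) →
        ∃! ρ, ρ ∈ S ∧ ∃ ν : Matrix (Fin n) (Fin n) F,
          ((∀ i, ν i i = 1) ∧ (∀ i j, j < i → ν i j = 0) ∧
            (∀ i j : Fin n, i < j → ν i j ∈ O)) ∧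
          η = ρ * ν) := by
  classical
  choose T hTO hTcard hT using hres
  have hϖd : ∀ d : ℕ, (ϖ : F) ^ d ≠ 0 := fun d => pow_ne_zero _ hϖ0
  refine ⟨s5S O ϖ T n, s5S_card O ϖ hϖ0 T ℓ hTcard n, ?_, ?_⟩
  · intro M hM
    obtain ⟨h1, h2, h3⟩ := s5S_props O ϖ hϖ0 T n M hM
    exact ⟨h1, h2, fun i j h => hTO _ (h3 i j h)⟩
  · rintro η ⟨hηd, hηl, hηO⟩
    have hmemS : s5r O ϖ T η ∈ s5S O ϖ T n := by
      rw [s5S, Finset.mem_image]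
      refine ⟨fun p => if hp : p.1 < p.2 then
        ϖ ^ ((p.2 : ℕ) - (p.1 : ℕ)) *
          (s5A O ϖ T η ((p.2 : ℕ) - (p.1 : ℕ)) p.1 p.2).1 else 0, ?_, ?_⟩
      · rw [Fintype.mem_piFinset]
        intro p
        rw [s5B]
        by_cases hp : p.1 < p.2
        · rw [if_pos hp, dif_pos hp]
          exact (s5A_inv O ϖ hϖO hϖ0 T hTO hT η hηO _ p.1 p.2 rfl hp).1
        · rw [if_neg hp, dif_neg hp, Finset.mem_singleton]
      · funext i j
        rcases lt_trichotomy i j with hij | hij | hij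
        · rw [s5toMat_upper ϖ n _ i j hij, s5r_upper O ϖ T η i j hij, dif_pos hij]
          field_simp
        · subst hij
          rw [s5toMat_diag, s5r_diag]
        · rw [s5toMat_lower ϖ n _ i j hij, s5r_lower O ϖ T η i j hij]
    refine ⟨s5r O ϖ T η, ⟨hmemS, s5n O ϖ T η,
      ⟨fun i => s5n_diag O ϖ T η i, fun i j h => s5n_lower O ϖ T η i j h,
        fun i j h => by
          rw [s5n_upper O ϖ T η i j h]
          exact (s5A_inv O ϖ hϖO hϖ0 T hTO hT η hηO _ i j rfl h).2.1⟩,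
      s5_factor O ϖ hϖO hϖ0 T hTO hT η hηd hηl hηO⟩, ?_⟩
    rintro ρ' ⟨hρ'S, ν', ⟨hνd, hνl, hνO⟩, hfac⟩
    obtain ⟨hρd, hρl, hρT⟩ := s5S_props O ϖ hϖ0 T n ρ' hρ'S
    have hu := s5_unique O ϖ T η hϖO hϖ0 hTO hT ρ' ν' hρd hρl hρT hνd hνl hνO hfac
    funext i j
    rcases lt_trichotomy i j with hij | hij | hij
    · rw [s5r_upper O ϖ T η i j hij]
      exact (hu _ i j rfl hij).1
    · subst hij
      rw [s5r_diag, hρd]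
    · rw [s5r_lower O ϖ T η i j hij]
      exact hρl i j hij
end

section
/- Let F be a non-archimedean local field, n ≥ 1, and consider G̃ = GL_n(F) × GL_{n+1}(F) × F^×, with H = GL_n(F) embedded via h ↦ (h, ι(h), det h), where ι is the top-left block embedding. Let ξ = (Id_n, ξ_{n+1}, 1) with ξ_{n+1} = [[w_n, 1_{1×n}],[0, 1]], where w_n is the antidiagonal permutation matrix. Then the stabilizer ξ⁻¹Hξ of the point x = Hξ ∈ H\G̃ intersects the lower-triangular Borel subgroup B̄_{G̃} of G̃ trivially, so the orbit map B̄_{G̃} → H\G̃, g ↦ xg, is injective. -/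
open Matrix

namespace Stmt9Aux

variable {F : Type*} [Field F]

lemma ltri_mul {m : ℕ} {A B : Matrix (Fin m) (Fin m) F}
    (hA : ∀ i j : Fin m, i < j → A i j = 0) (hB : ∀ i j : Fin m, i < j → B i j = 0) :
    ∀ i j : Fin m, i < j → (A * B) i j = 0 := by
  have hA' : A.BlockTriangular (OrderDual.toDual : Fin m → (Fin m)ᵒᵈ) :=
    fun i j hij => hA i j (OrderDual.toDual_lt_toDual.mp hij)
  have hB' : B.BlockTriangular (OrderDual.toDual : Fin m → (Fin m)ᵒᵈ) :=
    fun i j hij => hB i j (OrderDual.toDual_lt_toDual.mp hij)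
  exact fun i j hij => (hA'.mul hB') (OrderDual.toDual_lt_toDual.mpr hij)

lemma ltri_inv {m : ℕ} (u : GL (Fin m) F)
    (hu : ∀ i j : Fin m, i < j → (u : Matrix (Fin m) (Fin m) F) i j = 0) :
    ∀ i j : Fin m, i < j → ((u : Matrix (Fin m) (Fin m) F))⁻¹ i j = 0 := by
  haveI := u.invertible
  have hu' : (u : Matrix (Fin m) (Fin m) F).BlockTriangular
      (OrderDual.toDual : Fin m → (Fin m)ᵒᵈ) :=
    fun i j hij => hu i j (OrderDual.toDual_lt_toDual.mp hij)
  exact fun i j hij =>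
    (blockTriangular_inv_of_blockTriangular hu') (OrderDual.toDual_lt_toDual.mpr hij)

lemma Wmul {n : ℕ} (M : Matrix (Fin n) (Fin n) F) (i j : Fin n) :
    ((Matrix.of fun i j : Fin n => if (i : ℕ) + (j : ℕ) = n - 1 then (1 : F) else 0) * M) i j
      = M i.rev j := by
  rw [mul_apply]
  have key : ∀ k : Fin n,
      (Matrix.of fun i j : Fin n => if (i : ℕ) + (j : ℕ) = n - 1 then (1 : F) else 0) i k * M k j
        = if k = i.rev then M k j else 0 := by
    intro k
    have hi := i.isLt; have hk := k.isLt
    simp only [Matrix.of_apply]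
    by_cases hc : (i : ℕ) + (k : ℕ) = n - 1
    · rw [if_pos hc, if_pos (by rw [Fin.ext_iff, Fin.val_rev]; omega), one_mul]
    · rw [if_neg hc, if_neg (fun hkk => hc (by rw [Fin.ext_iff, Fin.val_rev] at hkk; omega)),
        zero_mul]
  rw [Finset.sum_congr rfl fun k _ => key k, Finset.sum_ite_eq' Finset.univ i.rev (fun k => M k j),
    if_pos (Finset.mem_univ _)]

lemma mulW {n : ℕ} (M : Matrix (Fin n) (Fin n) F) (i j : Fin n) :
    (M * (Matrix.of fun i j : Fin n => if (i : ℕ) + (j : ℕ) = n - 1 then (1 : F) else 0)) i j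
      = M i j.rev := by
  rw [mul_apply]
  have key : ∀ k : Fin n,
      M i k * (Matrix.of fun i j : Fin n => if (i : ℕ) + (j : ℕ) = n - 1 then (1 : F) else 0) k j
        = if k = j.rev then M i k else 0 := by
    intro k
    have hj := j.isLt; have hk := k.isLt
    simp only [Matrix.of_apply]
    by_cases hc : (k : ℕ) + (j : ℕ) = n - 1
    · rw [if_pos hc, if_pos (by rw [Fin.ext_iff, Fin.val_rev]; omega), mul_one]
    · rw [if_neg hc, if_neg (fun hkk => hc (by rw [Fin.ext_iff, Fin.val_rev] at hkk; omega)),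
        mul_zero]
  rw [Finset.sum_congr rfl fun k _ => key k, Finset.sum_ite_eq' Finset.univ j.rev (fun k => M i k),
    if_pos (Finset.mem_univ _)]

end Stmt9Aux

/-- Let `G̃ = GL_n(F) × GL_{n+1}(F) × F^×`, with `H = GL_n(F)` embedded via
`h ↦ (h, ι(h), det h)` (`ι` the top-left block embedding).  Let
`ξ = (Id, ξ_{n+1}, 1)` with `ξ_{n+1} = [[w_n, 1],[0,1]]` (`w_n` the antidiagonal permutation
matrix).  Then the stabilizer `ξ⁻¹Hξ` of `x = Hξ ∈ H\G̃` meets the lower-triangular Borel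
`B̄_{G̃}` trivially: if `b₁, b₂ ∈ B̄_{G̃}` and `Hξb₁ = Hξb₂` (i.e. `ξ b₁ b₂⁻¹ ξ⁻¹` lies in
the image of `H`), then `b₁ = b₂`; so the orbit map `B̄_{G̃} → H\G̃` is injective. -/
theorem stmt_9 {F : Type*} [Field F] (n : ℕ)
    (ξp : GL (Fin (n + 1)) F)
    (hξ : (ξp : Matrix (Fin (n + 1)) (Fin (n + 1)) F)
      = Matrix.reindex finSumFinEquiv finSumFinEquiv
          (Matrix.fromBlocks
            (Matrix.of fun i j : Fin n => if (i : ℕ) + (j : ℕ) = n - 1 then (1 : F) else 0)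
            (Matrix.of fun _ _ => (1 : F)) 0 1))
    (ξt : GL (Fin n) F × GL (Fin (n + 1)) F × Fˣ)
    (hξt : ξt = ((1 : GL (Fin n) F), ξp, (1 : Fˣ))) :
    ∀ b₁ b₂ : GL (Fin n) F × GL (Fin (n + 1)) F × Fˣ,
      (∀ i j : Fin n, i < j → (b₁.1 : Matrix (Fin n) (Fin n) F) i j = 0) →
      (∀ i j : Fin (n + 1), i < j → (b₁.2.1 : Matrix (Fin (n + 1)) (Fin (n + 1)) F) i j = 0) →
      (∀ i j : Fin n, i < j → (b₂.1 : Matrix (Fin n) (Fin n) F) i j = 0) →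
      (∀ i j : Fin (n + 1), i < j → (b₂.2.1 : Matrix (Fin (n + 1)) (Fin (n + 1)) F) i j = 0) →
      (∃ h : GL (Fin n) F,
        (ξt * b₁ * b₂⁻¹ * ξt⁻¹).1 = h ∧
        ((ξt * b₁ * b₂⁻¹ * ξt⁻¹).2.1 : Matrix (Fin (n + 1)) (Fin (n + 1)) F)
          = Matrix.reindex finSumFinEquiv finSumFinEquiv
              (Matrix.fromBlocks (h : Matrix (Fin n) (Fin n) F) 0 0 1) ∧
        (((ξt * b₁ * b₂⁻¹ * ξt⁻¹).2.2 : Fˣ) : F)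
          = Matrix.det (h : Matrix (Fin n) (Fin n) F)) →
      b₁ = b₂ := by
  intro b₁ b₂ hb1 hb1' hb2 hb2' hex
  obtain ⟨h, eq1, eq2, eq3⟩ := hex
  subst hξt
  simp only [Prod.fst_mul, Prod.snd_mul, Prod.fst_inv, Prod.snd_inv, one_mul, mul_one,
    inv_one] at eq1 eq2 eq3
  set e : Fin n ⊕ Fin 1 ≃ Fin (n + 1) := finSumFinEquiv with he
  set E : Matrix (Fin (n + 1)) (Fin (n + 1)) F :=
    (b₁.2.1 : Matrix (Fin (n + 1)) (Fin (n + 1)) F)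
      * ((b₂.2.1 : Matrix (Fin (n + 1)) (Fin (n + 1)) F))⁻¹ with hEdef
  have hE : ∀ i j : Fin (n + 1), i < j → E i j = 0 :=
    Stmt9Aux.ltri_mul hb1' (Stmt9Aux.ltri_inv _ hb2')
  -- the key matrix equation
  have key0 : (ξp : Matrix (Fin (n + 1)) (Fin (n + 1)) F) * E
      = Matrix.reindex e e (Matrix.fromBlocks (h : Matrix (Fin n) (Fin n) F) 0 0 1)
          * (ξp : Matrix (Fin (n + 1)) (Fin (n + 1)) F) := by
    have h1 : ξp * (b₁.2.1 * b₂.2.1⁻¹) = ξp * b₁.2.1 * b₂.2.1⁻¹ * ξp⁻¹ * ξp := by group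
    have h3 : ((ξp * (b₁.2.1 * b₂.2.1⁻¹) : GL (Fin (n + 1)) F) : Matrix (Fin (n + 1)) (Fin (n + 1)) F)
        = ((ξp * b₁.2.1 * b₂.2.1⁻¹ * ξp⁻¹ : GL (Fin (n + 1)) F) : Matrix (Fin (n + 1)) (Fin (n + 1)) F)
          * (ξp : Matrix (Fin (n + 1)) (Fin (n + 1)) F) := by
      rw [h1, Units.val_mul]
    rw [eq2] at h3
    rw [hEdef, ← Matrix.coe_units_inv, ← Units.val_mul, ← Units.val_mul]
    exact h3
  have hErw : E = Matrix.reindex e e (E.submatrix ⇑e ⇑e) := by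
    ext i j
    simp
  have rmul : ∀ A B : Matrix (Fin n ⊕ Fin 1) (Fin n ⊕ Fin 1) F,
      Matrix.reindex e e A * Matrix.reindex e e B = Matrix.reindex e e (A * B) := by
    intro A B
    simp only [Matrix.reindex_apply]
    exact Matrix.submatrix_mul_equiv A B _ e.symm _
  have keyB : Matrix.fromBlocks
        (Matrix.of fun i j : Fin n => if (i : ℕ) + (j : ℕ) = n - 1 then (1 : F) else 0)
        (Matrix.of fun _ _ => (1 : F)) 0 1 * (E.submatrix ⇑e ⇑e)
      = Matrix.fromBlocks (h : Matrix (Fin n) (Fin n) F) 0 0 1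
        * Matrix.fromBlocks
            (Matrix.of fun i j : Fin n => if (i : ℕ) + (j : ℕ) = n - 1 then (1 : F) else 0)
            (Matrix.of fun _ _ => (1 : F)) 0 1 := by
    apply (Matrix.reindex e e).injective
    rw [← rmul, ← rmul, ← hErw, ← hξ]
    exact key0
  rw [← Matrix.fromBlocks_toBlocks (E.submatrix ⇑e ⇑e), Matrix.fromBlocks_multiply,
    Matrix.fromBlocks_multiply, Matrix.fromBlocks_inj] at keyB
  obtain ⟨k11, k12, k21, k22⟩ := keyB
  simp only [Matrix.zero_mul, Matrix.mul_zero, Matrix.one_mul, Matrix.mul_one, add_zero,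
    zero_add] at k11 k12 k21 k22
  -- the top-right block of E' vanishes by lower-triangularity
  have hB0 : (E.submatrix ⇑e ⇑e).toBlocks₁₂ = 0 := by
    ext i j
    simp only [Matrix.toBlocks₁₂, Matrix.of_apply, Matrix.submatrix_apply, Matrix.zero_apply, he,
      finSumFinEquiv_apply_left, finSumFinEquiv_apply_right]
    apply hE
    rw [Fin.lt_def]
    simp only [Fin.coe_castAdd, Fin.coe_natAdd]
    have := i.isLt
    omega
  rw [k21, Matrix.mul_zero, add_zero] at k11
  rw [hB0, Matrix.mul_zero, zero_add, k22, Matrix.mul_one] at k12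
  -- row sums of h are 1
  have hrow : ∀ i : Fin n, ∑ k, (h : Matrix (Fin n) (Fin n) F) i k = 1 := by
    intro i
    have hc := congrFun (congrFun k12 i) (0 : Fin 1)
    simp only [Matrix.of_apply, Matrix.mul_apply, mul_one] at hc
    exact hc.symm
  -- h is lower triangular
  have hlow : ∀ i j : Fin n, i < j → (h : Matrix (Fin n) (Fin n) F) i j = 0 := by
    have hhm : (h : Matrix (Fin n) (Fin n) F)
        = (b₁.1 : Matrix (Fin n) (Fin n) F) * ((b₂.1 : Matrix (Fin n) (Fin n) F))⁻¹ := by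
      rw [← eq1, Units.val_mul, Matrix.coe_units_inv]
    rw [hhm]
    exact Stmt9Aux.ltri_mul hb1 (Stmt9Aux.ltri_inv _ hb2)
  -- h is upper triangular
  have hupper : ∀ i j : Fin n, j < i → (h : Matrix (Fin n) (Fin n) F) i j = 0 := by
    intro i j hji
    have hc := congrFun (congrFun k11 i) j.rev
    rw [Stmt9Aux.Wmul, Stmt9Aux.mulW, Fin.rev_rev] at hc
    rw [← hc]
    simp only [Matrix.toBlocks₁₁, Matrix.of_apply, Matrix.submatrix_apply, he,
      finSumFinEquiv_apply_left]
    apply hE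
    rw [Fin.lt_def]
    simp only [Fin.coe_castAdd]
    exact (Fin.rev_lt_rev.mpr hji)
  -- diagonal of h is 1
  have hdiag : ∀ i : Fin n, (h : Matrix (Fin n) (Fin n) F) i i = 1 := by
    intro i
    have hs := hrow i
    rwa [Finset.sum_eq_single i
      (fun k _ hk => by
        rcases lt_or_gt_of_ne hk with hlt | hgt
        · exact hupper i k hlt
        · exact hlow i k hgt)
      (fun hi => absurd (Finset.mem_univ i) hi)] at hs
  have hone : (h : Matrix (Fin n) (Fin n) F) = 1 := by
    ext i j
    rcases lt_trichotomy i j with hij | rfl | hij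
    · rw [hlow i j hij, Matrix.one_apply_ne (ne_of_lt hij)]
    · rw [hdiag i, Matrix.one_apply_eq]
    · rw [hupper i j hij, Matrix.one_apply_ne (ne_of_gt hij)]
  have hunit : h = 1 := Units.ext (by simpa using hone)
  -- conclude componentwise
  have c1 : b₁.1 * b₂.1⁻¹ = 1 := by rw [eq1, hunit]
  have c2 : b₁.2.1 * b₂.2.1⁻¹ = 1 := by
    have e2 : ξp * b₁.2.1 * b₂.2.1⁻¹ * ξp⁻¹ = 1 := by
      apply Units.ext
      rw [eq2, hunit]
      simp
    calc b₁.2.1 * b₂.2.1⁻¹ = ξp⁻¹ * (ξp * b₁.2.1 * b₂.2.1⁻¹ * ξp⁻¹) * ξp := by group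
      _ = 1 := by rw [e2]; group
  have c3 : b₁.2.2 * b₂.2.2⁻¹ = 1 := by
    apply Units.ext
    rw [eq3, hunit]
    simp
  have hfin : b₁ * b₂⁻¹ = 1 := by
    rw [Prod.ext_iff, Prod.ext_iff]
    refine ⟨?_, ?_, ?_⟩
    · simpa using c1
    · simpa using c2
    · simpa using c3
  exact mul_inv_eq_one.mp hfin
end

section
/- In the setup of the wild norm relation: let K^Iw be the Iwahori subgroup of G = GL_n(F)×GL_{n+1}(F) (upper triangular mod ϖ), τ = Δ(diag(ϖⁿ,…,ϖ)) ∈ G, N the upper-triangular unipotent radical of the Borel of G̃ = G × F^×, J_t = {x ∈ 𝒪^× : x ≡ 1 mod ϖ^t}, and x the open-orbit base point in X̃ = H\G̃. Then for t ≥ 0, the stabilizer of x in τ^t K^Iw τ^{-t} × J_t equals the stabilizer of x in τ^t K^Iw τ^{-t} × F^×; in particular, the index [Stab_{τ^{t+1}K^Iw τ^{-(t+1)} × J_t}(x) : Stab_{τ^{t+1}K^Iw τ^{-(t+1)} × J_{t+1}}(x)] equals 1. -/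
open Matrix

namespace Stmt10

variable {F : Type*} [Field F]

/-- `g ∈ GL_m(O)`: the entries of `g` and of `g⁻¹` lie in `O`. -/
def InGLO (O : Subring F) {m : ℕ} (g : GL (Fin m) F) : Prop :=
  (∀ i j, (g : Matrix (Fin m) (Fin m) F) i j ∈ O) ∧
  (∀ i j, ((g⁻¹ : GL (Fin m) F) : Matrix (Fin m) (Fin m) F) i j ∈ O)

/-- `g` lies in the standard Iwahori subgroup of `GL_m(F)`: `g ∈ GL_m(O)` and `g` is
upper-triangular modulo `ϖ`. -/
def Iwahori (O : Subring F) (ϖ : F) {m : ℕ} (g : GL (Fin m) F) : Prop :=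
  InGLO O g ∧ ∀ i j : Fin m, j < i →
    ∃ d ∈ O, (g : Matrix (Fin m) (Fin m) F) i j = ϖ * d

/-- `x ∈ J_t = {x ∈ O^× : x ≡ 1 mod ϖ^t}`. -/
def InJ (O : Subring F) (ϖ : F) (t : ℕ) (x : Fˣ) : Prop :=
  ((x : F) ∈ O) ∧ (((x⁻¹ : Fˣ) : F) ∈ O) ∧ ∃ d ∈ O, (x : F) - 1 = ϖ ^ t * d

/-- `g` lies in the image of `H = GL_n(F)` under `h ↦ (h, ι(h), det h)`. -/
def IsHemb (n : ℕ) (g : GL (Fin n) F × GL (Fin (n + 1)) F × Fˣ) : Prop :=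
  ∃ h : GL (Fin n) F, g.1 = h ∧
    (g.2.1 : Matrix (Fin (n + 1)) (Fin (n + 1)) F)
      = Matrix.reindex finSumFinEquiv finSumFinEquiv
          (Matrix.fromBlocks (h : Matrix (Fin n) (Fin n) F) 0 0 1) ∧
    ((g.2.2 : Fˣ) : F) = Matrix.det (h : Matrix (Fin n) (Fin n) F)

lemma det_mem_sub (O : Subring F) {m : ℕ} (M : Matrix (Fin m) (Fin m) F)
    (h : ∀ i j, M i j ∈ O) : M.det ∈ O := by
  rw [Matrix.det_apply]
  exact Subring.sum_mem _ fun σ _ => Subring.zsmul_mem _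
    (Subring.prod_mem _ fun i _ => h _ _) _

/-- inverse coe for GL. -/
lemma inv_coe {m : ℕ} (M : GL (Fin m) F) (N : Matrix (Fin m) (Fin m) F)
    (h : (M : Matrix (Fin m) (Fin m) F) * N = 1) :
    ((M⁻¹ : GL (Fin m) F) : Matrix (Fin m) (Fin m) F) = N := by
  calc ((M⁻¹ : GL (Fin m) F) : Matrix (Fin m) (Fin m) F)
      = ((M⁻¹ : GL (Fin m) F) : Matrix (Fin m) (Fin m) F) * ((M : Matrix (Fin m) (Fin m) F) * N) := by
        rw [h, mul_one]
    _ = (((M⁻¹ * M : GL (Fin m) F)) : Matrix (Fin m) (Fin m) F) * N := by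
        rw [Units.val_mul, mul_assoc]
    _ = N := by rw [inv_mul_cancel]; simp

lemma det_conj {m : ℕ} (τ k : GL (Fin m) F) :
    ((τ * k * τ⁻¹ : GL (Fin m) F) : Matrix (Fin m) (Fin m) F).det
      = (k : Matrix (Fin m) (Fin m) F).det := by
  have h1 : (((τ⁻¹ : GL (Fin m) F)) : Matrix (Fin m) (Fin m) F).det
      * ((τ : Matrix (Fin m) (Fin m) F)).det = 1 := by
    rw [← Matrix.det_mul, ← Units.val_mul, inv_mul_cancel, Units.val_one, Matrix.det_one]
  rw [Units.val_mul, Units.val_mul, Matrix.det_mul, Matrix.det_mul]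
  linear_combination (k : Matrix (Fin m) (Fin m) F).det * h1

/-- determinant congruence mod ϖ^t. -/
lemma det_sub_one_mem (O : Subring F) {ϖ : F} (hϖO : ϖ ∈ O) {m t : ℕ}
    (M : Matrix (Fin m) (Fin m) F)
    (hdiag : ∀ i, ∃ d ∈ O, M i i - 1 = ϖ ^ t * d)
    (hoff : ∀ i j, i ≠ j → ∃ d ∈ O, M i j = ϖ ^ t * d) :
    ∃ d ∈ O, M.det - 1 = ϖ ^ t * d := by
  have hmem : ∀ i j, M i j ∈ O := by
    intro i j
    by_cases hij : i = j
    · subst hij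
      obtain ⟨d, hd, hEq⟩ := hdiag i
      have : M i i = ϖ ^ t * d + 1 := by linear_combination hEq
      rw [this]
      exact add_mem (mul_mem (pow_mem hϖO t) hd) (one_mem O)
    · obtain ⟨d, hd, hEq⟩ := hoff i j hij
      rw [hEq]; exact mul_mem (pow_mem hϖO t) hd
  set π : O := ⟨ϖ, hϖO⟩ with hπ
  set M' : Matrix (Fin m) (Fin m) O := Matrix.of fun i j => (⟨M i j, hmem i j⟩ : O) with hM'
  set I : Ideal O := Ideal.span {π ^ t} with hI
  have hquot : (Ideal.Quotient.mk I).mapMatrix M' = (Ideal.Quotient.mk I).mapMatrix (1 : Matrix (Fin m) (Fin m) O) := by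
    ext i j
    simp only [RingHom.mapMatrix_apply, Matrix.map_apply]
    rw [Ideal.Quotient.eq]
    by_cases hij : i = j
    · subst hij
      obtain ⟨d, hd, hEq⟩ := hdiag i
      rw [Ideal.mem_span_singleton']
      refine ⟨⟨d, hd⟩, ?_⟩
      apply Subtype.ext
      push_cast [hM', hπ]
      simp [Matrix.one_apply]
      linear_combination -hEq
    · obtain ⟨d, hd, hEq⟩ := hoff i j hij
      rw [Ideal.mem_span_singleton']
      refine ⟨⟨d, hd⟩, ?_⟩
      apply Subtype.ext
      push_cast [hM', hπ]
      simp [Matrix.one_apply, hij]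
      linear_combination -hEq
  have hdet := congrArg Matrix.det hquot
  rw [← RingHom.map_det, ← RingHom.map_det, Matrix.det_one] at hdet
  rw [Ideal.Quotient.eq, Ideal.mem_span_singleton'] at hdet
  obtain ⟨b, hb⟩ := hdet
  refine ⟨b, b.2, ?_⟩
  have hMdet : M.det = (M'.det : F) := by
    have h2 := RingHom.map_det O.subtype M'
    have h3 : O.subtype.mapMatrix M' = M := by
      ext i j
      simp [hM']
    rw [h3] at h2
    exact h2.symm
  rw [hMdet]
  have := congrArg (Subtype.val) hb
  push_cast [hπ] at this
  linear_combination -this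

/-- entries of `τ^t k τ^{-t}` above the diagonal lie in `ϖ^t O`. -/
lemma upper_conj_mem (O : Subring F) {ϖ : F} (hϖO : ϖ ∈ O) (hϖ0 : ϖ ≠ 0)
    {m n : ℕ} (hm : m ≤ n + 1) (t : ℕ) (τ k : GL (Fin m) F)
    (hτ : (τ : Matrix (Fin m) (Fin m) F) = Matrix.diagonal fun i : Fin m => ϖ ^ (n - (i : ℕ)))
    (hk : ∀ i j, (k : Matrix (Fin m) (Fin m) F) i j ∈ O)
    (i j : Fin m) (hij : (i : ℕ) < (j : ℕ)) :
    ∃ d ∈ O, ((τ ^ t * k * (τ ^ t)⁻¹ : GL (Fin m) F) : Matrix (Fin m) (Fin m) F) i j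
      = ϖ ^ t * d := by
  have hτt : ((τ ^ t : GL (Fin m) F) : Matrix (Fin m) (Fin m) F)
      = Matrix.diagonal fun i : Fin m => ϖ ^ ((n - (i : ℕ)) * t) := by
    rw [Units.val_pow_eq_pow_val, hτ, Matrix.diagonal_pow]
    ext a b
    by_cases h : a = b <;> simp [h, Matrix.diagonal_apply, Pi.pow_apply, pow_mul]
  have hτtinv : (((τ ^ t)⁻¹ : GL (Fin m) F) : Matrix (Fin m) (Fin m) F)
      = Matrix.diagonal fun i : Fin m => (ϖ ^ ((n - (i : ℕ)) * t))⁻¹ := by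
    apply inv_coe
    rw [hτt, Matrix.diagonal_mul_diagonal]
    ext a b
    by_cases h : a = b <;>
      simp [h, Matrix.diagonal_apply, Matrix.one_apply, mul_inv_cancel₀ (pow_ne_zero _ hϖ0)]
  have hjn : (j : ℕ) ≤ n := by have := j.isLt; omega
  obtain ⟨c, hc⟩ : ∃ c, n - (i : ℕ) = 1 + c + (n - (j : ℕ)) :=
    ⟨(n - (i : ℕ)) - (n - (j : ℕ)) - 1, by omega⟩
  have hpow : ϖ ^ ((n - (i : ℕ)) * t)
      = ϖ ^ t * ϖ ^ (c * t) * ϖ ^ ((n - (j:ℕ)) * t) := by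
    rw [← pow_add, ← pow_add, hc]
    congr 1
    ring
  refine ⟨ϖ ^ (c * t) * (k : Matrix (Fin m) (Fin m) F) i j,
    mul_mem (pow_mem hϖO _) (hk i j), ?_⟩
  rw [Units.val_mul, Units.val_mul, hτt, hτtinv, Matrix.mul_diagonal, Matrix.diagonal_mul, hpow]
  field_simp

/-- reversal sums. -/
lemma wsum_left {n : ℕ} (f : Fin n → F) (i : Fin n) :
    ∑ k : Fin n, (if (i : ℕ) + (k : ℕ) = n - 1 then (1:F) else 0) * f k = f i.rev := by
  rw [Finset.sum_eq_single i.rev]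
  · have hc : (i : ℕ) + (i.rev : ℕ) = n - 1 := by
      have := i.isLt; rw [Fin.val_rev]; omega
    rw [if_pos hc, one_mul]
  · intro k _ hk
    have hne : (i : ℕ) + (k : ℕ) ≠ n - 1 := by
      intro hc
      apply hk
      apply Fin.ext
      rw [Fin.val_rev]
      have := i.isLt; have := k.isLt; omega
    rw [if_neg hne, zero_mul]
  · simp

lemma wsum_right {n : ℕ} (f : Fin n → F) (s : Fin n) :
    ∑ k : Fin n, f k * (if (k : ℕ) + (s : ℕ) = n - 1 then (1:F) else 0) = f s.rev := by
  rw [Finset.sum_eq_single s.rev]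
  · have hc : (s.rev : ℕ) + (s : ℕ) = n - 1 := by
      have := s.isLt; rw [Fin.val_rev]; omega
    rw [if_pos hc, mul_one]
  · intro k _ hk
    have hne : (k : ℕ) + (s : ℕ) ≠ n - 1 := by
      intro hc
      apply hk
      apply Fin.ext
      rw [Fin.val_rev]
      have := s.isLt; have := k.isLt; omega
    rw [if_neg hne, mul_zero]
  · simp



lemma key (O : Subring F) {ϖ : F} (hϖO : ϖ ∈ O) (hϖ0 : ϖ ≠ 0) {n : ℕ}
    (ξp : GL (Fin (n + 1)) F)
    (hξ : (ξp : Matrix (Fin (n + 1)) (Fin (n + 1)) F)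
      = Matrix.reindex finSumFinEquiv finSumFinEquiv
          (Matrix.fromBlocks
            (Matrix.of fun i j : Fin n => if (i : ℕ) + (j : ℕ) = n - 1 then (1 : F) else 0)
            (Matrix.of fun _ _ => (1 : F)) 0 1))
    (τn : GL (Fin n) F)
    (hτn : (τn : Matrix (Fin n) (Fin n) F) = Matrix.diagonal fun i : Fin n => ϖ ^ (n - (i : ℕ)))
    (τm : GL (Fin (n + 1)) F)
    (hτm : (τm : Matrix (Fin (n + 1)) (Fin (n + 1)) F)
      = Matrix.diagonal fun i : Fin (n + 1) => ϖ ^ (n - (i : ℕ)))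
    (t : ℕ)
    (g : GL (Fin n) F × GL (Fin (n + 1)) F × Fˣ)
    (hK : ∃ k : GL (Fin n) F × GL (Fin (n + 1)) F, Iwahori O ϖ k.1 ∧ Iwahori O ϖ k.2 ∧
          (g.1, g.2.1) = (τn, τm) ^ t * k * ((τn, τm) ^ t)⁻¹)
    (hH : IsHemb n (((1 : GL (Fin n) F), ξp, (1 : Fˣ)) * g
          * ((1 : GL (Fin n) F), ξp, (1 : Fˣ))⁻¹)) :
    InJ O ϖ t g.2.2 := by
  obtain ⟨k, hk1, hk2, heq⟩ := hK
  obtain ⟨h, hh1, hh2, hh3⟩ := hH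
  simp only [Prod.mk_mul_mk, Prod.fst_mul, Prod.snd_mul, Prod.fst_inv, Prod.snd_inv,
    Prod.inv_mk, one_mul, mul_one, inv_one] at hh1 hh2 hh3
  have hg1 : g.1 = τn ^ t * k.1 * (τn ^ t)⁻¹ := by
    have := congrArg Prod.fst heq
    simpa [Prod.pow_fst] using this
  have hg2 : g.2.1 = τm ^ t * k.2 * (τm ^ t)⁻¹ := by
    have := congrArg Prod.snd heq
    simpa [Prod.pow_snd] using this
  -- matrix equation in the Sum world
  set e : Fin n ⊕ Fin 1 ≃ Fin (n + 1) := finSumFinEquiv with he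
  set W : Matrix (Fin n) (Fin n) F :=
    Matrix.of fun i j : Fin n => if (i : ℕ) + (j : ℕ) = n - 1 then (1 : F) else 0 with hW
  set c1 : Matrix (Fin n) (Fin 1) F := Matrix.of fun _ _ => (1 : F) with hc1
  set E' : Matrix (Fin n ⊕ Fin 1) (Fin n ⊕ Fin 1) F :=
    ((g.2.1 : Matrix (Fin (n + 1)) (Fin (n + 1)) F)).submatrix ⇑e ⇑e with hE'
  have hmul1 : (ξp : Matrix (Fin (n+1)) (Fin (n+1)) F) * (g.2.1 : Matrix (Fin (n+1)) (Fin (n+1)) F)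
      = (Matrix.reindex e e (Matrix.fromBlocks (h : Matrix (Fin n) (Fin n) F) 0 0 1))
        * (ξp : Matrix (Fin (n+1)) (Fin (n+1)) F) := by
    have h1 : (ξp : Matrix (Fin (n+1)) (Fin (n+1)) F) * (g.2.1 : Matrix (Fin (n+1)) (Fin (n+1)) F)
        * ((ξp⁻¹ : GL (Fin (n+1)) F) : Matrix (Fin (n+1)) (Fin (n+1)) F)
        = Matrix.reindex e e (Matrix.fromBlocks (h : Matrix (Fin n) (Fin n) F) 0 0 1) := by
      rw [← hh2]; simp [Units.val_mul]
    have hcan : ((ξp⁻¹ : GL (Fin (n+1)) F) : Matrix (Fin (n+1)) (Fin (n+1)) F)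
        * (ξp : Matrix (Fin (n+1)) (Fin (n+1)) F) = 1 := by
      rw [← Units.val_mul, inv_mul_cancel, Units.val_one]
    calc (ξp : Matrix (Fin (n+1)) (Fin (n+1)) F) * (g.2.1 : Matrix (Fin (n+1)) (Fin (n+1)) F)
        = (ξp : Matrix (Fin (n+1)) (Fin (n+1)) F) * (g.2.1 : Matrix (Fin (n+1)) (Fin (n+1)) F)
          * (((ξp⁻¹ : GL (Fin (n+1)) F) : Matrix (Fin (n+1)) (Fin (n+1)) F)
             * (ξp : Matrix (Fin (n+1)) (Fin (n+1)) F)) := by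
          rw [hcan, mul_one]
      _ = ((ξp : Matrix (Fin (n+1)) (Fin (n+1)) F) * (g.2.1 : Matrix (Fin (n+1)) (Fin (n+1)) F)
          * ((ξp⁻¹ : GL (Fin (n+1)) F) : Matrix (Fin (n+1)) (Fin (n+1)) F))
          * (ξp : Matrix (Fin (n+1)) (Fin (n+1)) F) := by simp only [mul_assoc]
      _ = _ := by rw [h1]
  have hxi : (ξp : Matrix (Fin (n+1)) (Fin (n+1)) F)
      = (Matrix.fromBlocks W c1 0 1).submatrix ⇑e.symm ⇑e.symm := by
    rw [hξ, Matrix.reindex_apply]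
  have hEid : (g.2.1 : Matrix (Fin (n+1)) (Fin (n+1)) F) = E'.submatrix ⇑e.symm ⇑e.symm := by
    rw [hE', Matrix.submatrix_submatrix]
    simp [Equiv.self_comp_symm]
  have hmat : Matrix.fromBlocks W c1 (0 : Matrix (Fin 1) (Fin n) F) (1 : Matrix (Fin 1) (Fin 1) F) * E'
      = Matrix.fromBlocks (h : Matrix (Fin n) (Fin n) F) (0 : Matrix (Fin n) (Fin 1) F)
        (0 : Matrix (Fin 1) (Fin n) F) (1 : Matrix (Fin 1) (Fin 1) F)
        * Matrix.fromBlocks W c1 (0 : Matrix (Fin 1) (Fin n) F) (1 : Matrix (Fin 1) (Fin 1) F) := by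
    have h2 := hmul1
    rw [Matrix.reindex_apply, hxi, hEid] at h2
    rw [Matrix.submatrix_mul_equiv, Matrix.submatrix_mul_equiv] at h2
    have h3 := congrArg (fun X => X.submatrix ⇑e ⇑e) h2
    simp only [Matrix.submatrix_submatrix] at h3
    simpa [Equiv.symm_comp_self] using h3
  have hE0 : ∀ s : Fin n, E' (Sum.inr 0) (Sum.inl s) = 0 := by
    intro s
    have h4 := congrFun (congrFun hmat (Sum.inr 0)) (Sum.inl s)
    simp only [Matrix.mul_apply, Fintype.sum_sum_type, Matrix.fromBlocks_apply₁₁,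
      Matrix.fromBlocks_apply₁₂, Matrix.fromBlocks_apply₂₁, Matrix.fromBlocks_apply₂₂,
      Matrix.zero_apply, Matrix.one_apply, zero_mul, mul_zero, Finset.sum_const_zero,
      zero_add, add_zero, Fin.sum_univ_one] at h4
    simpa using h4
  have hE1 : E' (Sum.inr 0) (Sum.inr 0) = 1 := by
    have h4 := congrFun (congrFun hmat (Sum.inr 0)) (Sum.inr 0)
    simp only [Matrix.mul_apply, Fintype.sum_sum_type, Matrix.fromBlocks_apply₁₁,
      Matrix.fromBlocks_apply₁₂, Matrix.fromBlocks_apply₂₁, Matrix.fromBlocks_apply₂₂,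
      Matrix.zero_apply, Matrix.one_apply, zero_mul, mul_zero, Finset.sum_const_zero,
      zero_add, add_zero, Fin.sum_univ_one] at h4
    simpa using h4
  have hA : ∀ r s : Fin n, E' (Sum.inl r.rev) (Sum.inl s)
      = (h : Matrix (Fin n) (Fin n) F) r s.rev := by
    intro r s
    have h4 := congrFun (congrFun hmat (Sum.inl r)) (Sum.inl s)
    simp only [Matrix.mul_apply, Fintype.sum_sum_type, Matrix.fromBlocks_apply₁₁,
      Matrix.fromBlocks_apply₁₂, Matrix.fromBlocks_apply₂₁, Matrix.fromBlocks_apply₂₂,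
      Matrix.zero_apply, Matrix.one_apply, zero_mul, mul_zero, Finset.sum_const_zero,
      zero_add, add_zero, Fin.sum_univ_one, hW, hc1, Matrix.of_apply, one_mul] at h4
    rw [wsum_left (fun kk => E' (Sum.inl kk) (Sum.inl s)) r,
      wsum_right (fun kk => (h : Matrix (Fin n) (Fin n) F) r kk) s] at h4
    rw [← h4, hE0 s, add_zero]
  have hB : ∀ r : Fin n, E' (Sum.inl r.rev) (Sum.inr 0)
      = (∑ kk : Fin n, (h : Matrix (Fin n) (Fin n) F) r kk) - 1 := by
    intro r
    have h4 := congrFun (congrFun hmat (Sum.inl r)) (Sum.inr 0)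
    simp only [Matrix.mul_apply, Fintype.sum_sum_type, Matrix.fromBlocks_apply₁₁,
      Matrix.fromBlocks_apply₁₂, Matrix.fromBlocks_apply₂₁, Matrix.fromBlocks_apply₂₂,
      Matrix.zero_apply, Matrix.one_apply, zero_mul, mul_zero, Finset.sum_const_zero,
      zero_add, add_zero, Fin.sum_univ_one, hW, hc1, Matrix.of_apply, one_mul, mul_one] at h4
    rw [wsum_left (fun kk => E' (Sum.inl kk) (Sum.inr 0)) r] at h4
    rw [hE1] at h4
    linear_combination h4
  have hupper : ∀ r s : Fin n, (r : ℕ) < (s : ℕ) →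
      ∃ d ∈ O, (h : Matrix (Fin n) (Fin n) F) r s = ϖ ^ t * d := by
    intro r s hrs
    have h5 := upper_conj_mem O hϖO hϖ0 (Nat.le_succ n) t τn k.1 hτn hk1.1.1 r s hrs
    rwa [← hg1, hh1] at h5
  have hEup : ∀ i j : Fin (n + 1), (i : ℕ) < (j : ℕ) →
      ∃ d ∈ O, (g.2.1 : Matrix (Fin (n+1)) (Fin (n+1)) F) i j = ϖ ^ t * d := by
    intro i j hij
    have h5 := upper_conj_mem O hϖO hϖ0 (le_refl (n + 1)) t τm k.2 hτm hk2.1.1 i j hij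
    rwa [← hg2] at h5
  have hlower : ∀ r s : Fin n, (s : ℕ) < (r : ℕ) →
      ∃ d ∈ O, (h : Matrix (Fin n) (Fin n) F) r s = ϖ ^ t * d := by
    intro r s hsr
    have h5 : E' (Sum.inl r.rev) (Sum.inl s.rev) = (h : Matrix (Fin n) (Fin n) F) r s := by
      rw [hA r s.rev, Fin.rev_rev]
    have h6 : E' (Sum.inl r.rev) (Sum.inl s.rev)
        = (g.2.1 : Matrix (Fin (n+1)) (Fin (n+1)) F) (e (Sum.inl r.rev)) (e (Sum.inl s.rev)) := by
      rw [hE']; rfl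
    have hlt : ((e (Sum.inl r.rev) : Fin (n+1)) : ℕ) < ((e (Sum.inl s.rev) : Fin (n+1)) : ℕ) := by
      simp only [he, finSumFinEquiv_apply_left, Fin.coe_castAdd, Fin.val_rev]
      have := r.isLt; have := s.isLt; omega
    obtain ⟨d, hd, hEq⟩ := hEup _ _ hlt
    exact ⟨d, hd, by rw [← h5, h6, hEq]⟩
  have hrowsum : ∀ r : Fin n,
      ∃ d ∈ O, (∑ kk : Fin n, (h : Matrix (Fin n) (Fin n) F) r kk) - 1 = ϖ ^ t * d := by
    intro r
    have h6 : E' (Sum.inl r.rev) (Sum.inr 0)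
        = (g.2.1 : Matrix (Fin (n+1)) (Fin (n+1)) F) (e (Sum.inl r.rev)) (e (Sum.inr 0)) := by
      rw [hE']; rfl
    have hlt : ((e (Sum.inl r.rev) : Fin (n+1)) : ℕ) < ((e (Sum.inr 0) : Fin (n+1)) : ℕ) := by
      simp only [he, finSumFinEquiv_apply_left, finSumFinEquiv_apply_right, Fin.coe_castAdd,
        Fin.coe_natAdd, Fin.val_rev]
      have := r.isLt; omega
    obtain ⟨d, hd, hEq⟩ := hEup _ _ hlt
    exact ⟨d, hd, by rw [← hB r, h6, hEq]⟩
  have hdiagP : ∀ r : Fin n, ∃ d ∈ O, (h : Matrix (Fin n) (Fin n) F) r r - 1 = ϖ ^ t * d := by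
    intro r
    classical
    have hesum : ∃ d ∈ O,
        (∑ kk ∈ Finset.univ.erase r, (h : Matrix (Fin n) (Fin n) F) r kk) = ϖ ^ t * d := by
      refine Finset.sum_induction _ (fun x => ∃ d ∈ O, x = ϖ ^ t * d) ?_ ⟨0, zero_mem O, by ring⟩ ?_
      · rintro a b ⟨da, hda, ha⟩ ⟨db, hdb, hb⟩
        exact ⟨da + db, add_mem hda hdb, by rw [ha, hb]; ring⟩
      · intro x hx
        have hne := Finset.ne_of_mem_erase hx
        rcases lt_trichotomy ((x : ℕ)) ((r : ℕ)) with hc | hc | hc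
        · exact hlower r x hc
        · exact absurd (Fin.ext hc) hne
        · exact hupper r x hc
    obtain ⟨d1, hd1, he1⟩ := hrowsum r
    obtain ⟨d2, hd2, he2⟩ := hesum
    refine ⟨d1 - d2, sub_mem hd1 hd2, ?_⟩
    have hsplit : (h : Matrix (Fin n) (Fin n) F) r r
        + ∑ kk ∈ Finset.univ.erase r, (h : Matrix (Fin n) (Fin n) F) r kk
        = ∑ kk : Fin n, (h : Matrix (Fin n) (Fin n) F) r kk :=
      Finset.add_sum_erase _ _ (Finset.mem_univ r)
    linear_combination he1 - he2 + hsplit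
  have hoffP : ∀ i j : Fin n, i ≠ j →
      ∃ d ∈ O, (h : Matrix (Fin n) (Fin n) F) i j = ϖ ^ t * d := by
    intro i j hij
    rcases lt_trichotomy ((i : ℕ)) ((j : ℕ)) with hc | hc | hc
    · exact hupper i j hc
    · exact absurd (Fin.ext hc) hij
    · exact hlower i j hc
  have hdet := det_sub_one_mem O hϖO (h : Matrix (Fin n) (Fin n) F) hdiagP hoffP
  refine ⟨?_, ?_, ?_⟩
  · obtain ⟨d, hd, hEq⟩ := hdet
    rw [hh3]
    have hrw : (h : Matrix (Fin n) (Fin n) F).det = ϖ ^ t * d + 1 := by linear_combination hEq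
    rw [hrw]
    exact add_mem (mul_mem (pow_mem hϖO t) hd) (one_mem O)
  · have hg1inv : g.1⁻¹ = τn ^ t * (k.1)⁻¹ * (τn ^ t)⁻¹ := by
      rw [hg1]; group
    have hd2 : ((g.1⁻¹ : GL (Fin n) F) : Matrix (Fin n) (Fin n) F).det
        = (((k.1)⁻¹ : GL (Fin n) F) : Matrix (Fin n) (Fin n) F).det := by
      rw [hg1inv]; exact det_conj _ _
    have hvalinv : ((g.2.2⁻¹ : Fˣ) : F)
        = ((g.1⁻¹ : GL (Fin n) F) : Matrix (Fin n) (Fin n) F).det := by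
      rw [Units.val_inv_eq_inv_val]
      apply inv_eq_of_mul_eq_one_right
      rw [hh3, ← hh1, ← Matrix.det_mul, ← Units.val_mul, mul_inv_cancel, Units.val_one,
        Matrix.det_one]
    rw [hvalinv, hd2]
    exact det_mem_sub O _ hk1.1.2
  · obtain ⟨d, hd, hEq⟩ := hdet
    exact ⟨d, hd, by rw [hh3]; exact hEq⟩


/-- in the wild norm relation setup, the stabilizer of the open-orbit point
`x = Hξ ∈ X̃ = H\G̃` inside `τ^t K^Iw τ^{-t} × J_t` equals its stabilizer inside
`τ^t K^Iw τ^{-t} × F^×`; in particular the stabilizers in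
`τ^{t+1} K^Iw τ^{-(t+1)} × J_t` and `τ^{t+1} K^Iw τ^{-(t+1)} × J_{t+1}` coincide
(the index `[Stab_{…×J_t}(x) : Stab_{…×J_{t+1}}(x)]` is `1`). -/
theorem stmt_10 (O : Subring F) (ϖ : F) (ℓ : ℕ)
    (hϖO : ϖ ∈ O) (hϖ0 : ϖ ≠ 0)
    (hval : ∀ x : F, x ∈ O ∨ x⁻¹ ∈ O)
    (n : ℕ)
    (ξp : GL (Fin (n + 1)) F)
    (hξ : (ξp : Matrix (Fin (n + 1)) (Fin (n + 1)) F)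
      = Matrix.reindex finSumFinEquiv finSumFinEquiv
          (Matrix.fromBlocks
            (Matrix.of fun i j : Fin n => if (i : ℕ) + (j : ℕ) = n - 1 then (1 : F) else 0)
            (Matrix.of fun _ _ => (1 : F)) 0 1))
    (τn : GL (Fin n) F)
    (hτn : (τn : Matrix (Fin n) (Fin n) F) = Matrix.diagonal fun i : Fin n => ϖ ^ (n - (i : ℕ)))
    (τm : GL (Fin (n + 1)) F)
    (hτm : (τm : Matrix (Fin (n + 1)) (Fin (n + 1)) F)
      = Matrix.diagonal fun i : Fin (n + 1) => ϖ ^ (n - (i : ℕ)))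
    (t : ℕ) :
    ({g : GL (Fin n) F × GL (Fin (n + 1)) F × Fˣ |
        (∃ k : GL (Fin n) F × GL (Fin (n + 1)) F, Iwahori O ϖ k.1 ∧ Iwahori O ϖ k.2 ∧
          (g.1, g.2.1) = (τn, τm) ^ t * k * ((τn, τm) ^ t)⁻¹) ∧
        InJ O ϖ t g.2.2 ∧
        IsHemb n (((1 : GL (Fin n) F), ξp, (1 : Fˣ)) * g
          * ((1 : GL (Fin n) F), ξp, (1 : Fˣ))⁻¹)}
      = {g : GL (Fin n) F × GL (Fin (n + 1)) F × Fˣ |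
        (∃ k : GL (Fin n) F × GL (Fin (n + 1)) F, Iwahori O ϖ k.1 ∧ Iwahori O ϖ k.2 ∧
          (g.1, g.2.1) = (τn, τm) ^ t * k * ((τn, τm) ^ t)⁻¹) ∧
        IsHemb n (((1 : GL (Fin n) F), ξp, (1 : Fˣ)) * g
          * ((1 : GL (Fin n) F), ξp, (1 : Fˣ))⁻¹)})
    ∧
    ({g : GL (Fin n) F × GL (Fin (n + 1)) F × Fˣ |
        (∃ k : GL (Fin n) F × GL (Fin (n + 1)) F, Iwahori O ϖ k.1 ∧ Iwahori O ϖ k.2 ∧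
          (g.1, g.2.1) = (τn, τm) ^ (t + 1) * k * ((τn, τm) ^ (t + 1))⁻¹) ∧
        InJ O ϖ t g.2.2 ∧
        IsHemb n (((1 : GL (Fin n) F), ξp, (1 : Fˣ)) * g
          * ((1 : GL (Fin n) F), ξp, (1 : Fˣ))⁻¹)}
      = {g : GL (Fin n) F × GL (Fin (n + 1)) F × Fˣ |
        (∃ k : GL (Fin n) F × GL (Fin (n + 1)) F, Iwahori O ϖ k.1 ∧ Iwahori O ϖ k.2 ∧
          (g.1, g.2.1) = (τn, τm) ^ (t + 1) * k * ((τn, τm) ^ (t + 1))⁻¹) ∧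
        InJ O ϖ (t + 1) g.2.2 ∧
        IsHemb n (((1 : GL (Fin n) F), ξp, (1 : Fˣ)) * g
          * ((1 : GL (Fin n) F), ξp, (1 : Fˣ))⁻¹)}) := by
  constructor
  · ext g
    simp only [Set.mem_setOf_eq]
    constructor
    · rintro ⟨h1, _, h3⟩
      exact ⟨h1, h3⟩
    · rintro ⟨h1, h3⟩
      exact ⟨h1, key O hϖO hϖ0 ξp hξ τn hτn τm hτm t g h1 h3, h3⟩
  · ext g
    simp only [Set.mem_setOf_eq]
    constructor
    · rintro ⟨h1, -, h3⟩
      exact ⟨h1, key O hϖO hϖ0 ξp hξ τn hτn τm hτm (t + 1) g h1 h3, h3⟩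
    · rintro ⟨h1, h2, h3⟩
      refine ⟨h1, ?_, h3⟩
      obtain ⟨hu, hui, d, hd, hEq⟩ := h2
      exact ⟨hu, hui, ϖ * d, mul_mem hϖO hd, by rw [hEq, pow_succ]; ring⟩

end Stmt10
end

section
/- Let G be a td-group with closed subgroup H, X = H\G, and let K₁ ⊴ K₂ be open compact subgroups of G. Let K ⊆ K₂ be the subgroup containing K₁ corresponding to the image of (H∩K₂)/(H∩K₁) ↪ K₂/K₁. Then (a) 𝟏[1̄K₂] = Σ_{γ ∈ K\K₂} 𝟏[1̄Kγ] in C_c^∞(X,ℚ), i.e., the sets 1̄Kγ for γ ∈ K\K₂ are pairwise disjoint and cover 1̄K₂, and (b) 1̄K₁ = 1̄K as subsets of X, so that 1̄K₂ = ⊔_{γ ∈ K\K₂} γ̄K₁ (using normality of K₁). -/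
open Pointwise Set

/-!
Write `S = (H ∩ K₂)K₁`. Absorbing `H ∩ K₂` into `H` gives `HS = HK₁`, and since `T` is a set of
representatives for `S\K₂` we get `K₂ = ⋃_{γ ∈ T} Sγ`, hence `HK₂ = ⋃_{γ ∈ T} HSγ`. These pieces
are disjoint: from `hsγ₁ = h's'γ₂` one gets `sγ₁γ₂⁻¹ = (h⁻¹h')s'` with `h⁻¹h' ∈ H ∩ K₂`, so
`sγ₁γ₂⁻¹ ∈ S` and both `γ₁` and `γ₂` represent the class of `sγ₁`. Finally `K₁` is normalized by
`γ ∈ K₂`, so `HSγ = HK₁γ = HγK₁`.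
-/

theorem Set.setOf_exists_mul_eq {G : Type*} [Mul G] (s t : Set G) :
    {g : G | ∃ a ∈ s, ∃ b ∈ t, g = a * b} = s * t := by
  ext g
  simp [Set.mem_mul, eq_comm]

namespace Subgroup

variable {G : Type*} [Group G]

theorem coe_mul_coe_of_le {H K : Subgroup G} (hKH : K ≤ H) : (H : Set G) * K = H :=
  subset_antisymm ((mul_subset_mul_left hKH).trans (coe_mul_coe H).subset)
    (subset_mul_left _ K.one_mem)

theorem coe_mul_coe_inf_mul (H K : Subgroup G) (B : Set G) :
    (H : Set G) * ((H ⊓ K : Subgroup G) * B) = H * B := by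
  rw [← mul_assoc, coe_mul_coe_of_le inf_le_left]

section Representatives

variable (H : Subgroup G) {L : Subgroup G} {S T : Set G} (hS : S ⊆ L) (hT : T ⊆ L)
  (hTrep : ∀ g ∈ L, ∃! γ, γ ∈ T ∧ g * γ⁻¹ ∈ S)
include hS hT hTrep

theorem coe_eq_iUnion_mul_singleton : (L : Set G) = ⋃ γ ∈ T, S * {γ} := by
  refine subset_antisymm (fun g hg => ?_) (iUnion₂_subset fun γ hγ => ?_)
  · obtain ⟨γ, ⟨hγT, hgγ⟩, -⟩ := hTrep g hg
    exact mem_biUnion hγT ⟨g * γ⁻¹, hgγ, γ, rfl, inv_mul_cancel_right g γ⟩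
  · rintro _ ⟨s, hs, _, rfl, rfl⟩
    exact L.mul_mem (hS hs) (hT hγ)

theorem coe_mul_eq_iUnion_mul_singleton :
    (H : Set G) * (L : Set G) = ⋃ γ ∈ T, (H : Set G) * S * {γ} := by
  simp_rw [coe_eq_iUnion_mul_singleton hS hT hTrep, mul_iUnion₂, mul_assoc]

theorem pairwiseDisjoint_mul_mul_singleton (hHS : ((H ⊓ L : Subgroup G) : Set G) * S ⊆ S) :
    T.PairwiseDisjoint fun γ => (H : Set G) * S * {γ} := by
  intro γ₁ hγ₁ γ₂ hγ₂ hne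
  simp only [Function.onFun, mul_singleton, disjoint_left]
  rintro _ ⟨_, ⟨h, hh, s, hs, rfl⟩, rfl⟩ ⟨_, ⟨h', hh', s', hs', rfl⟩, heq⟩
  have hsγ : s * γ₁ ∈ L := L.mul_mem (hS hs) (hT hγ₁)
  have hshift : s * γ₁ * γ₂⁻¹ = (h⁻¹ * h') * s' := by
    have heq : h' * s' * γ₂ = h * s * γ₁ := heq
    rw [show s * γ₁ = h⁻¹ * (h' * s' * γ₂) by rw [heq]; group]
    group
  have hhL : h⁻¹ * h' ∈ L := by
    rw [show h⁻¹ * h' = s * γ₁ * γ₂⁻¹ * s'⁻¹ by rw [hshift]; group]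
    exact L.mul_mem (L.mul_mem hsγ (L.inv_mem (hT hγ₂))) (L.inv_mem (hS hs'))
  have hγ₂rep : s * γ₁ * γ₂⁻¹ ∈ S :=
    hshift ▸ hHS (mul_mem_mul ⟨H.mul_mem (H.inv_mem hh) hh', hhL⟩ hs')
  exact hne <| (hTrep _ hsγ).unique ⟨hγ₁, by simpa using hs⟩ ⟨hγ₂, hγ₂rep⟩

end Representatives

end Subgroup

open Subgroup

theorem stmt_18_general {G : Type*} [Group G]
    (H : Subgroup G)
    (K₁ K₂ : Subgroup G) (h12 : K₁ ≤ K₂)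
    (hnormal : ∀ g ∈ K₂, ∀ x ∈ K₁, g * x * g⁻¹ ∈ K₁)
    (Kset : Set G)
    (hKset : Kset = {g : G | ∃ h ∈ (H : Set G) ∩ (K₂ : Set G), ∃ x ∈ K₁, g = h * x})
    (T : Finset G) (hTsub : (↑T : Set G) ⊆ (K₂ : Set G))
    (hTcover : ∀ g ∈ K₂, ∃! γ, γ ∈ T ∧ g * γ⁻¹ ∈ Kset) :
    ((H : Set G) * (K₂ : Set G) = ⋃ γ ∈ T, (H : Set G) * Kset * {γ}) ∧
    (∀ γ₁ ∈ T, ∀ γ₂ ∈ T, γ₁ ≠ γ₂ →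
      Disjoint ((H : Set G) * Kset * {γ₁}) ((H : Set G) * Kset * {γ₂})) ∧
    ((H : Set G) * (K₁ : Set G) = (H : Set G) * Kset) ∧
    ((H : Set G) * (K₂ : Set G) = ⋃ γ ∈ T, (H : Set G) * {γ} * (K₁ : Set G)) ∧
    (∀ γ₁ ∈ T, ∀ γ₂ ∈ T, γ₁ ≠ γ₂ →
      Disjoint ((H : Set G) * {γ₁} * (K₁ : Set G))
        ((H : Set G) * {γ₂} * (K₁ : Set G))) := by
  replace hKset : Kset = ((H ⊓ K₂ : Subgroup G) : Set G) * K₁ :=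
    hKset.trans (setOf_exists_mul_eq _ (K₁ : Set G))
  subst hKset
  have hSK₂ : ((H ⊓ K₂ : Subgroup G) : Set G) * K₁ ⊆ K₂ :=
    (mul_subset_mul (SetLike.coe_subset_coe.2 inf_le_right) (SetLike.coe_subset_coe.2 h12)).trans
      (coe_mul_coe K₂).subset
  have hHS : ((H ⊓ K₂ : Subgroup G) : Set G) * ((H ⊓ K₂ : Subgroup G) * K₁) ⊆
      (H ⊓ K₂ : Subgroup G) * K₁ := by
    rw [← mul_assoc, coe_mul_coe]
  have hHK := coe_mul_coe_inf_mul H K₂ K₁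
  have hcover := coe_mul_eq_iUnion_mul_singleton H hSK₂ hTsub hTcover
  have hdisj := pairwiseDisjoint_mul_mul_singleton H hSK₂ hTsub hTcover hHS
  have hslide : ∀ γ ∈ T, (H : Set G) * ((H ⊓ K₂ : Subgroup G) * K₁) * {γ} = H * {γ} * K₁ := by
    intro γ hγ
    have hγN : {γ} ⊆ (normalizer (K₁ : Set G) : Set G) :=
      singleton_subset_iff.2 (le_normalizer_iff.2 hnormal (hTsub hγ))
    rw [hHK, mul_assoc, ← set_mul_normalizer_comm _ _ hγN, mul_assoc]
  refine ⟨hcover, fun γ₁ h₁ γ₂ h₂ => hdisj h₁ h₂, hHK.symm, ?_, fun γ₁ h₁ γ₂ h₂ hne => ?_⟩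
  · rw [hcover]
    exact iUnion₂_congr hslide
  · rw [← hslide γ₁ h₁, ← hslide γ₂ h₂]
    exact hdisj h₁ h₂ hne

/-- Let `G` be a td-group, `H` a closed subgroup, `X = H\G` (subsets of `X`
are modelled by their preimages in `G`), and `K₁ ⊴ K₂` open compact subgroups.  Let
`K = (H∩K₂)·K₁ ⊆ K₂` be the subgroup corresponding to the image of
`(H∩K₂)/(H∩K₁) ↪ K₂/K₁`, and let `T` be a set of representatives for `K\K₂`.  Then:
(a) the sets `1̄Kγ` (`γ ∈ T`) are pairwise disjoint and cover `1̄K₂`, i.e.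
    `HK₂ = ⊔_{γ∈T} HKγ`;
(b) `1̄K₁ = 1̄K` (i.e. `HK₁ = HK`), so that `1̄K₂ = ⊔_{γ∈T} γ̄K₁`
    (i.e. `HK₂ = ⊔_{γ∈T} HγK₁`, using normality of `K₁`). -/
theorem stmt_18 {G : Type*} [Group G] [TopologicalSpace G] [IsTopologicalGroup G]
    (H : Subgroup G) (hHclosed : IsClosed (H : Set G))
    (K₁ K₂ : Subgroup G) (h12 : K₁ ≤ K₂)
    (hK₁o : IsOpen (K₁ : Set G)) (hK₂o : IsOpen (K₂ : Set G))
    (hK₁c : IsCompact (K₁ : Set G)) (hK₂c : IsCompact (K₂ : Set G))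
    (hnormal : ∀ g ∈ K₂, ∀ x ∈ K₁, g * x * g⁻¹ ∈ K₁)
    (Kset : Set G)
    (hKset : Kset = {g : G | ∃ h ∈ (H : Set G) ∩ (K₂ : Set G), ∃ x ∈ K₁, g = h * x})
    (T : Finset G) (hTsub : (↑T : Set G) ⊆ (K₂ : Set G))
    (hTcover : ∀ g ∈ K₂, ∃! γ, γ ∈ T ∧ g * γ⁻¹ ∈ Kset) :
    ((H : Set G) * (K₂ : Set G) = ⋃ γ ∈ T, (H : Set G) * Kset * {γ}) ∧
    (∀ γ₁ ∈ T, ∀ γ₂ ∈ T, γ₁ ≠ γ₂ →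
      Disjoint ((H : Set G) * Kset * {γ₁}) ((H : Set G) * Kset * {γ₂})) ∧
    ((H : Set G) * (K₁ : Set G) = (H : Set G) * Kset) ∧
    ((H : Set G) * (K₂ : Set G) = ⋃ γ ∈ T, (H : Set G) * {γ} * (K₁ : Set G)) ∧
    (∀ γ₁ ∈ T, ∀ γ₂ ∈ T, γ₁ ≠ γ₂ →
      Disjoint ((H : Set G) * {γ₁} * (K₁ : Set G))
        ((H : Set G) * {γ₂} * (K₁ : Set G))) :=
  stmt_18_general H K₁ K₂ h12 hnormal Kset hKset T hTsub hTcover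
end
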